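/- arXiv:1209.1461 — 13 statements merged into one kernel-verified Lean document; each statement's English description precedes it below -/
import Mathlib

section
/- Let T be a bounded linear operator on a complex Banach space X. Then the following two conditions are equivalent: (T1) every complete norm ‖·‖₁ on X with respect to which T is bounded is equivalent to the original norm of X; (T2) whenever Y is a complex Banach space, S : Y → Y is a bounded linear operator, and G : X → Y is a (not necessarily continuous) invertible linear operator satisfying G∘T = S∘G, the operator G is bounded. -/
/- (T1) ⇒ (T2): pulling back the norm of `Y` along `G` gives a complete norm on `X` for which
`T` is bounded, hence it is equivalent to the norm of `X`, i.e. `G` is bounded.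
(T2) ⇒ (T1): a complete norm `N` for which `T` is bounded turns `X` into a Banach space on
which `T` is a bounded operator `S`, and the identity of `X` intertwines `T` with `S`. So the
identity is bounded from `‖·‖` to `N`, and by the open mapping theorem the two norms are
equivalent. -/

universe u

/-- `N` is a complete norm on the complex vector space `X`: it satisfies the norm axioms
and every `N`-Cauchy sequence `N`-converges. -/
structure IsCompleteNorm {X : Type*} [AddCommGroup X] [Module ℂ X] (N : X → ℝ) : Prop where
  eq_zero_of_map_eq_zero : ∀ x : X, N x = 0 → x = 0
  map_smul : ∀ (c : ℂ) (x : X), N (c • x) = ‖c‖ * N x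
  add_le : ∀ x y : X, N (x + y) ≤ N x + N y
  complete : ∀ u : ℕ → X,
    (∀ ε : ℝ, 0 < ε → ∃ n₀ : ℕ, ∀ m ≥ n₀, ∀ n ≥ n₀, N (u m - u n) < ε) →
    ∃ x : X, Filter.Tendsto (fun n => N (u n - x)) Filter.atTop (nhds 0)

theorem LinearEquiv.isCompleteNorm_norm_comp {X Y : Type*} [AddCommGroup X] [Module ℂ X]
    [NormedAddCommGroup Y] [NormedSpace ℂ Y] [CompleteSpace Y] (G : X ≃ₗ[ℂ] Y) :
    IsCompleteNorm fun x => ‖G x‖ where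
  eq_zero_of_map_eq_zero x hx := G.injective (by simpa using hx)
  map_smul c x := by simp only [map_smul, norm_smul]
  add_le x y := by simpa only [map_add] using norm_add_le (G x) (G y)
  complete u hu := by
    have hcauchy : CauchySeq fun n => G (u n) := Metric.cauchySeq_iff.mpr fun ε hε => by
      simpa only [dist_eq_norm, map_sub] using hu ε hε
    obtain ⟨y, hy⟩ := cauchySeq_tendsto_of_complete hcauchy
    refine ⟨G.symm y, ?_⟩
    simpa only [map_sub, G.apply_symm_apply, dist_eq_norm] using
      tendsto_iff_dist_tendsto_zero.mp hy

namespace IsCompleteNorm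

variable {X : Type u} [AddCommGroup X] [Module ℂ X] {N : X → ℝ}

theorem map_zero (hN : IsCompleteNorm N) : N 0 = 0 := by
  simpa using hN.map_smul 0 0

theorem map_neg (hN : IsCompleteNorm N) (x : X) : N (-x) = N x := by
  simpa using hN.map_smul (-1) x

/-- `X` normed by `N`; indexing the synonym by the proof of `IsCompleteNorm N` lets its
normed-space structure be a global instance. -/
def Space (_ : IsCompleteNorm N) : Type u := X

variable (hN : IsCompleteNorm N)

instance : AddCommGroup hN.Space := inferInstanceAs (AddCommGroup X)

instance : Module ℂ hN.Space := inferInstanceAs (Module ℂ X)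

def toSpace : X ≃ₗ[ℂ] hN.Space := LinearEquiv.refl ℂ X

noncomputable instance : NormedAddCommGroup hN.Space :=
  AddGroupNorm.toNormedAddCommGroup
    { toFun := fun x => N (hN.toSpace.symm x)
      map_zero' := hN.map_zero
      add_le' := hN.add_le
      neg' := hN.map_neg
      eq_zero_of_map_eq_zero' := hN.eq_zero_of_map_eq_zero }

noncomputable instance : NormedSpace ℂ hN.Space where
  norm_smul_le c x := (hN.map_smul c x).le

instance : CompleteSpace hN.Space := by
  refine Metric.complete_of_cauchySeq_tendsto fun u hu => ?_
  obtain ⟨x, hx⟩ := hN.complete u fun ε hε => by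
    simp only [Metric.cauchySeq_iff, dist_eq_norm] at hu
    exact hu ε hε
  exact ⟨hN.toSpace x, tendsto_iff_norm_sub_tendsto_zero.mpr hx⟩

end IsCompleteNorm

theorem IsCompleteNorm.exists_equivalent_of_le_mul_norm {X : Type u} [NormedAddCommGroup X]
    [NormedSpace ℂ X] [CompleteSpace X] {N : X → ℝ} (hN : IsCompleteNorm N) (C : ℝ)
    (hC : ∀ x, N x ≤ C * ‖x‖) :
    ∃ c C : ℝ, 0 < c ∧ 0 < C ∧ ∀ x : X, c * ‖x‖ ≤ N x ∧ N x ≤ C * ‖x‖ := by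
  let e : X ≃L[ℂ] hN.Space := hN.toSpace.toContinuousLinearEquivOfContinuous
    (AddMonoidHomClass.continuous_of_bound hN.toSpace C hC)
  obtain ⟨K, hK, hinv⟩ := (e.symm : hN.Space →L[ℂ] X).bound
  obtain ⟨C', hC', hdir⟩ := (e : X →L[ℂ] hN.Space).bound
  refine ⟨K⁻¹, C', inv_pos.mpr hK, hC', fun x => ⟨?_, hdir x⟩⟩
  rw [inv_mul_le_iff₀ hK]
  calc ‖x‖ = ‖e.symm (e x)‖ := by rw [e.symm_apply_apply]
    _ ≤ K * N x := hinv (e x)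

/-- Proposition 1.1: a bounded linear operator `T` on a complex Banach space `X`
determines the topology of `X` (every complete norm making `T` bounded is equivalent
to the original norm) if and only if every (not necessarily continuous) linear
bijection `G : X → Y` onto a complex Banach space `Y` intertwining `T` with a bounded
operator `S` on `Y` is itself bounded. -/
theorem determinesTopology_iff_intertwiner_bounded
    {X : Type u} [NormedAddCommGroup X] [NormedSpace ℂ X] [CompleteSpace X]
    (T : X →L[ℂ] X) :
    (∀ N : X → ℝ, IsCompleteNorm N → (∃ C : ℝ, ∀ x : X, N (T x) ≤ C * N x) →
      ∃ c C : ℝ, 0 < c ∧ 0 < C ∧ ∀ x : X, c * ‖x‖ ≤ N x ∧ N x ≤ C * ‖x‖) ↔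
    (∀ (Y : Type u) [NormedAddCommGroup Y] [NormedSpace ℂ Y] [CompleteSpace Y]
      (S : Y →L[ℂ] Y) (G : X ≃ₗ[ℂ] Y),
      (∀ x : X, G (T x) = S (G x)) → ∃ C : ℝ, ∀ x : X, ‖G x‖ ≤ C * ‖x‖) := by
  constructor
  · intro hT1 Y _ _ _ S G hGT
    have hTbounded : ∀ x, ‖G (T x)‖ ≤ ‖S‖ * ‖G x‖ := fun x => hGT x ▸ S.le_opNorm (G x)
    obtain ⟨_, C, _, _, hequiv⟩ := hT1 _ G.isCompleteNorm_norm_comp ⟨‖S‖, hTbounded⟩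
    exact ⟨C, fun x => (hequiv x).2⟩
  · rintro hT2 N hN ⟨C, hTbounded⟩
    let S : hN.Space →L[ℂ] hN.Space :=
      (hN.toSpace.conj T.toLinearMap).mkContinuous C fun x => hTbounded (hN.toSpace.symm x)
    obtain ⟨C', hG⟩ := hT2 hN.Space S hN.toSpace fun _ => rfl
    exact hN.exists_equivalent_of_le_mul_norm C' hG
end

section
/- Let T be a linear operator on a complex vector space X with empty spectrum, i.e., T − zI is bijective for every z ∈ ℂ. Then there exists a set A and a ℂ-linear bijection G from X onto the direct sum ⨁_{α ∈ A} ℂ(z) of copies of the field of complex rational functions (finitely supported functions A → ℂ(z)), such that G(Tx) equals the image of G(x) under componentwise multiplication by the rational function z. Moreover, the cardinality of A is uniquely determined: if G' : X → ⨁_{β ∈ B} ℂ(z) is another ℂ-linear bijection with the same intertwining property, then A and B have the same cardinality. -/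
/-!
Since `ℂ` is algebraically closed, the spectral mapping theorem turns the emptiness of the
spectrum of `T` into invertibility of `p(T)` for every nonzero polynomial `p`. Hence the
`ℂ[z]`-module structure on `X` given by `T` extends to the fraction field `ℂ(z)`: `X` becomes a
`ℂ(z)`-vector space on which `z` acts as `T`, and a basis indexed by `A` gives `G`.
Conversely, any intertwining `G'` is `ℂ[z]`-linear, hence `ℂ(z)`-linear, so `#B` is the
`ℂ(z)`-dimension of `X` as well.
-/

universe u

open Module Polynomial

theorem spectrum_eq_empty_of_bijective_sub_smul {K V : Type*} [Field K] [AddCommGroup V]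
    [Module K V] (T : End K V) (hT : ∀ z : K, Function.Bijective fun x => T x - z • x) :
    spectrum K T = ∅ := by
  refine Set.eq_empty_of_forall_notMem fun z hz => spectrum.mem_iff.mp hz ?_
  rw [← neg_sub, IsUnit.neg_iff, End.isUnit_iff]
  exact hT z

theorem isUnit_aeval_of_spectrum_eq_empty {K A : Type*} [Field K] [IsAlgClosed K] [Ring A]
    [Algebra K A] {a : A} (ha : spectrum K a = ∅) {p : K[X]} (hp : p ≠ 0) :
    IsUnit (aeval a p) := by
  rcases le_or_gt p.degree 0 with hdeg | hdeg
  · rw [eq_C_of_degree_le_zero hdeg, aeval_C]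
    refine (Ne.isUnit fun h => hp ?_).map (algebraMap K A)
    rw [eq_C_of_degree_le_zero hdeg, h, C_0]
  · rw [← spectrum.zero_notMem_iff K, spectrum.map_polynomial_aeval_of_degree_pos a p hdeg, ha,
      Set.image_empty]
    exact Set.notMem_empty 0

theorem isLocalizedModule_id_of_isUnit {R M : Type*} [CommSemiring R] [AddCommMonoid M]
    [Module R M] {S : Submonoid R} (h : ∀ s : S, IsUnit (algebraMap R (End R M) s)) :
    IsLocalizedModule S (LinearMap.id : M →ₗ[R] M) :=
  ⟨h, fun m => ⟨⟨m, 1⟩, one_smul _ _⟩, fun hm => ⟨1, congrArg _ hm⟩⟩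

theorem Module.AEval'.isUnit_algebraMap_end {R M : Type*} [CommRing R] [AddCommGroup M]
    [Module R M] (φ : End R M) {p : R[X]} (hp : IsUnit (aeval φ p)) :
    IsUnit (algebraMap R[X] (End R[X] (AEval' φ)) p) := by
  rw [End.isUnit_iff] at hp ⊢
  have : ⇑(algebraMap R[X] (End R[X] (AEval' φ)) p)
      = AEval'.of φ ∘ aeval φ p ∘ (AEval'.of φ).symm := by
    ext m
    obtain ⟨m, rfl⟩ := (AEval'.of φ).surjective m
    simp [Module.algebraMap_end_apply, ← AEval.of_aeval_smul]
  rw [this]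
  exact (AEval'.of φ).bijective.comp (hp.comp (AEval'.of φ).symm.bijective)

theorem RatFunc.polynomial_X_smul_eq_X_smul {K M : Type*} [Field K] [AddCommMonoid M]
    [Module K[X] M] [Module (RatFunc K) M] [IsScalarTower K[X] (RatFunc K) M] (m : M) :
    (Polynomial.X : K[X]) • m = (RatFunc.X : RatFunc K) • m := by
  rw [← algebraMap_smul (RatFunc K), RatFunc.algebraMap_X]

section Intertwining

variable {K : Type*} [Field K] {V : Type u} [AddCommGroup V] [Module K V] (T : End K V)

theorem exists_linearEquiv_finsupp_ratFunc [Module (RatFunc K) (AEval' T)]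
    [IsScalarTower K[X] (RatFunc K) (AEval' T)] :
    ∃ (A : Type u) (G : V ≃ₗ[K] (A →₀ RatFunc K)),
      ∀ x, G (T x) = (RatFunc.X : RatFunc K) • G x := by
  let b := Basis.ofVectorSpace (RatFunc K) (AEval' T)
  refine ⟨_, (AEval'.of T).trans ((b.repr.restrictScalars K[X]).restrictScalars K),
    fun x => ?_⟩
  calc b.repr (AEval'.of T (T x))
      = b.repr ((X : K[X]) • AEval'.of T x) := by
        rw [AEval'.X_smul_of]
    _ = (X : K[X]) • b.repr (AEval'.of T x) :=
        (b.repr.restrictScalars K[X]).map_smul _ _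
    _ = (RatFunc.X : RatFunc K) • b.repr (AEval'.of T x) :=
        RatFunc.polynomial_X_smul_eq_X_smul _

universe w in
theorem mk_eq_mk_of_intertwining {A B : Type w} (G : V ≃ₗ[K] (A →₀ RatFunc K))
    (G' : V ≃ₗ[K] (B →₀ RatFunc K)) (hG : ∀ x, G (T x) = (RatFunc.X : RatFunc K) • G x)
    (hG' : ∀ x, G' (T x) = (RatFunc.X : RatFunc K) • G' x) :
    Cardinal.mk A = Cardinal.mk B := by
  let e := (LinearEquiv.ofAEval T G fun x =>
      (hG x).trans (RatFunc.polynomial_X_smul_eq_X_smul _).symm).symm.trans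
    (LinearEquiv.ofAEval T G' fun x => (hG' x).trans (RatFunc.polynomial_X_smul_eq_X_smul _).symm)
  have hrank := (e.extendScalarsOfIsLocalization (nonZeroDivisors K[X]) (RatFunc K)).rank_eq
  simpa only [rank_finsupp_self, Cardinal.lift_inj] using hrank

end Intertwining

/-- Theorem 2.2: a linear operator with empty spectrum on a complex vector space is
similar to a direct sum of copies of the multiplication operator `f(z) ↦ z·f(z)` on the
field `ℂ(z)` of complex rational functions, and the number of copies is uniquely
determined. -/
theorem empty_spectrum_similar_to_multiplication
    {X : Type u} [AddCommGroup X] [Module ℂ X] (T : X →ₗ[ℂ] X)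
    (hT : ∀ z : ℂ, Function.Bijective fun x => T x - z • x) :
    ∃ (A : Type u) (G : X ≃ₗ[ℂ] (A →₀ RatFunc ℂ)),
      (∀ x : X, G (T x) = (RatFunc.X : RatFunc ℂ) • G x) ∧
      ∀ (B : Type u) (G' : X ≃ₗ[ℂ] (B →₀ RatFunc ℂ)),
        (∀ x : X, G' (T x) = (RatFunc.X : RatFunc ℂ) • G' x) →
        Cardinal.mk A = Cardinal.mk B := by
  let ι : AEval' T →ₗ[ℂ[X]] AEval' T := LinearMap.id
  have : IsLocalizedModule (nonZeroDivisors ℂ[X]) ι :=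
    isLocalizedModule_id_of_isUnit fun p => AEval'.isUnit_algebraMap_end T <|
      isUnit_aeval_of_spectrum_eq_empty (spectrum_eq_empty_of_bijective_sub_smul T hT)
        (nonZeroDivisors.ne_zero p.2)
  let _ : Module (RatFunc ℂ) (AEval' T) := IsLocalizedModule.module (nonZeroDivisors ℂ[X]) ι
  have := IsLocalizedModule.isScalarTower_module (A := RatFunc ℂ) (nonZeroDivisors ℂ[X]) ι
  obtain ⟨A, G, hG⟩ := exists_linearEquiv_finsupp_ratFunc T
  exact ⟨A, G, hG, fun B G' hG' => mk_eq_mk_of_intertwining T G G' hG hG'⟩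
end

section
/- Let T be an injective quasinilpotent linear operator on a complex vector space X, and let X_T = ⋂_{n≥0} Tⁿ(X). Then X_T is a T-invariant subspace and the restriction T₀ of T to X_T has empty spectrum: for every z ∈ ℂ, the map x ↦ Tx − z·x is a bijection of X_T onto X_T. -/
/-!
An endomorphism `f` commuting with `T` maps each `Tⁿ(X)`, hence `X_T`, into itself. If `f` is
moreover injective, `f x = Tⁿ (f v)` forces `x = Tⁿ v`, so the `f`-preimage of a point of `X_T`
lies in `X_T` as soon as each of its representations `Tⁿ u` can be chosen with `u ∈ f(X)`. For
`f = T - z` with `z ≠ 0` this holds as `f` is surjective; for `f = T`, since `Tⁿ⁺¹ w = Tⁿ (T w)`.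
-/

open Set

namespace Module.End

variable {R M : Type*} [Semiring R] [AddCommMonoid M] [Module R M] {f T : Module.End R M}

theorem mapsTo_iInter_range_pow (hc : Commute f T) :
    MapsTo f (⋂ n : ℕ, (LinearMap.range (T ^ n) : Set M))
      (⋂ n : ℕ, (LinearMap.range (T ^ n) : Set M)) := by
  intro x hx
  simp only [mem_iInter, SetLike.mem_coe] at hx ⊢
  intro n
  obtain ⟨y, rfl⟩ := hx n
  exact ⟨f y, by rw [← mul_apply, ← (hc.pow_right n).eq, mul_apply]⟩

theorem eq_pow_apply_of_apply_eq_pow_apply (hc : Commute f T) (hf : Function.Injective f)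
    {x v : M} {n : ℕ} (h : f x = (T ^ n) (f v)) : x = (T ^ n) v :=
  hf <| by rw [h, ← mul_apply, ← (hc.pow_right n).eq, mul_apply]

theorem surjOn_iInter_range_pow_of_bijective (hc : Commute f T) (hf : Function.Bijective f) :
    SurjOn f (⋂ n : ℕ, (LinearMap.range (T ^ n) : Set M))
      (⋂ n : ℕ, (LinearMap.range (T ^ n) : Set M)) := by
  intro y hy
  obtain ⟨x, rfl⟩ := hf.2 y
  refine ⟨x, ?_, rfl⟩
  simp only [mem_iInter, SetLike.mem_coe] at hy ⊢
  intro n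
  obtain ⟨u, hu⟩ := hy n
  obtain ⟨v, rfl⟩ := hf.2 u
  exact ⟨v, (eq_pow_apply_of_apply_eq_pow_apply hc hf.1 hu.symm).symm⟩

theorem surjOn_iInter_range_pow_self (hT : Function.Injective T) :
    SurjOn T (⋂ n : ℕ, (LinearMap.range (T ^ n) : Set M))
      (⋂ n : ℕ, (LinearMap.range (T ^ n) : Set M)) := by
  intro y hy
  simp only [mem_iInter, SetLike.mem_coe] at hy
  obtain ⟨x, rfl⟩ : y ∈ LinearMap.range T := by simpa using hy 1
  refine ⟨x, ?_, rfl⟩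
  simp only [mem_iInter, SetLike.mem_coe]
  intro n
  obtain ⟨w, hw⟩ := hy (n + 1)
  rw [pow_succ, mul_apply] at hw
  exact ⟨w, (eq_pow_apply_of_apply_eq_pow_apply (Commute.refl T) hT hw.symm).symm⟩

end Module.End

/-- Lemma 3.1: if `T` is an injective quasinilpotent linear operator on a complex vector
space `X`, then `X_T = ⋂ₙ Tⁿ(X)` is `T`-invariant and the restriction of `T` to `X_T` has
empty spectrum: for every `z ∈ ℂ`, `x ↦ Tx - z•x` maps `X_T` bijectively onto `X_T`. -/
theorem restriction_to_intersection_has_empty_spectrum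
    {X : Type*} [AddCommGroup X] [Module ℂ X] (T : X →ₗ[ℂ] X)
    (hinj : Function.Injective T)
    (hq : ∀ z : ℂ, z ≠ 0 → Function.Bijective fun x => T x - z • x) :
    (∀ x ∈ ⋂ n : ℕ, ((LinearMap.range (T ^ n) : Submodule ℂ X) : Set X),
        T x ∈ ⋂ n : ℕ, ((LinearMap.range (T ^ n) : Submodule ℂ X) : Set X)) ∧
    ∀ z : ℂ, Set.BijOn (fun x => T x - z • x)
      (⋂ n : ℕ, ((LinearMap.range (T ^ n) : Submodule ℂ X) : Set X))
      (⋂ n : ℕ, ((LinearMap.range (T ^ n) : Submodule ℂ X) : Set X)) := by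
  refine ⟨Module.End.mapsTo_iInter_range_pow (Commute.refl T), fun z => ?_⟩
  rcases eq_or_ne z 0 with rfl | hz
  · simpa using BijOn.mk (Module.End.mapsTo_iInter_range_pow (Commute.refl T)) hinj.injOn
      (Module.End.surjOn_iInter_range_pow_self hinj)
  · have hc : Commute (T - z • 1 : Module.End ℂ X) T :=
      (Commute.refl T).sub_left ((Commute.one_left T).smul_left z)
    have hbij : Function.Bijective (T - z • 1 : Module.End ℂ X) := hq z hz
    exact ⟨Module.End.mapsTo_iInter_range_pow hc, hbij.1.injOn,
      Module.End.surjOn_iInter_range_pow_of_bijective hc hbij⟩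
end

section
/- Let T be an injective linear operator on a complex vector space X and E a linear subspace of X such that X is the algebraic direct sum of E and T(X) (i.e., E ∩ T(X) = {0} and E + T(X) = X). Then for every x ∈ X there exists a unique sequence (xₙ)_{n≥0} of elements of E such that x − Σ_{k=0}^{n} Tᵏxₖ ∈ T^{n+1}(X) for every n ≥ 0. -/
/-!
Peel off digits greedily: write `x = x₀ + T y₁`, then `y₁ = x₁ + T y₂`, and so on, so that
`x = x₀ + T x₁ + ⋯ + Tⁿ xₙ + Tⁿ⁺¹ yₙ₊₁`. For uniqueness, the difference `d` of two expansions
has all partial sums `∑_{k ≤ n} Tᵏ dₖ` in `Tⁿ⁺¹(X)`; if `d₀ = ⋯ = dₙ₋₁ = 0` this says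
`Tⁿ dₙ = Tⁿ⁺¹ w`, so `dₙ = T w ∈ E ∩ T(X) = 0` by injectivity of `Tⁿ`.
-/

open Finset LinearMap

section Semiring

variable {R M : Type*} [Semiring R] [AddCommMonoid M] [Module R M] {T : M →ₗ[R] M}
  {E : Submodule R M}

theorem exists_digits_of_sup_range_eq_top (hsup : E ⊔ range T = ⊤) (x : M) :
    ∃ f y : ℕ → M, (∀ n, f n ∈ E) ∧ y 0 = x ∧ ∀ n, y n = f n + T (y (n + 1)) := by
  have hdec : ∀ z : M, ∃ p : M × M, p.1 ∈ E ∧ z = p.1 + T p.2 := fun z => by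
    obtain ⟨e, he, _, ⟨w, rfl⟩, h⟩ := Submodule.mem_sup.mp (hsup ▸ Submodule.mem_top : z ∈ _)
    exact ⟨(e, w), he, h.symm⟩
  choose p hpE hp using hdec
  let y : ℕ → M := fun n => (fun z => (p z).2)^[n] x
  refine ⟨fun n => (p (y n)).1, y, fun n => hpE _, rfl, fun n => ?_⟩
  simpa only [y, Function.iterate_succ_apply'] using hp (y n)

theorem eq_sum_add_pow_apply_of_eq_add_apply {f y : ℕ → M}
    (h : ∀ n, y n = f n + T (y (n + 1))) (n : ℕ) :
    y 0 = ∑ k ∈ range n, (T ^ k) (f k) + (T ^ n) (y n) := by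
  induction n with
  | zero => simp
  | succ n ih =>
    rw [ih, h n, map_add, sum_range_succ, add_assoc, pow_succ, Module.End.mul_apply]

theorem eq_zero_of_pow_apply_mem_range_pow_succ (hinj : Function.Injective T)
    (hdisj : E ⊓ range T = ⊥) {e : M} (he : e ∈ E) {n : ℕ}
    (h : (T ^ n) e ∈ range (T ^ (n + 1))) : e = 0 := by
  obtain ⟨w, hw⟩ := h
  rw [pow_succ, Module.End.mul_apply] at hw
  have hTw : T w = e := (Module.End.coe_pow T n ▸ hinj.iterate n) hw
  have hmem : e ∈ E ⊓ range T := ⟨he, w, hTw⟩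
  rwa [hdisj, Submodule.mem_bot] at hmem

end Semiring

section Ring

variable {R M : Type*} [Ring R] [AddCommGroup M] [Module R M] {T : M →ₗ[R] M}
  {E : Submodule R M}

theorem eq_zero_of_sum_pow_apply_mem_range_pow_succ (hinj : Function.Injective T)
    (hdisj : E ⊓ range T = ⊥) {d : ℕ → M} (hd : ∀ n, d n ∈ E)
    (h : ∀ n, ∑ k ∈ range (n + 1), (T ^ k) (d k) ∈ range (T ^ (n + 1))) : d = 0 := by
  funext n
  induction n using Nat.strong_induction_on with
  | _ n ih =>
    have hprefix : ∑ k ∈ range n, (T ^ k) (d k) = 0 :=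
      sum_eq_zero fun k hk => by rw [ih k (mem_range.mp hk), Pi.zero_apply, map_zero]
    have hn := h n
    rw [sum_range_succ, hprefix, zero_add] at hn
    exact eq_zero_of_pow_apply_mem_range_pow_succ hinj hdisj (hd n) hn

end Ring

/-- Lemma 3.4: if `T` is an injective linear operator on a complex vector space `X` and
`E` is a linear subspace with `X = E ⊕ T(X)` (algebraically), then every `x ∈ X` admits a
unique sequence `(xₙ)` of elements of `E` with
`x ≡ x₀ + Tx₁ + ⋯ + Tⁿxₙ (mod Tⁿ⁺¹(X))` for every `n`. -/
theorem exists_unique_expansion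
    {X : Type*} [AddCommGroup X] [Module ℂ X] (T : X →ₗ[ℂ] X)
    (hinj : Function.Injective T) (E : Submodule ℂ X)
    (hdisj : E ⊓ LinearMap.range T = ⊥) (hsup : E ⊔ LinearMap.range T = ⊤) (x : X) :
    ∃! f : ℕ → X, (∀ n : ℕ, f n ∈ E) ∧
      ∀ n : ℕ, x - ∑ k ∈ Finset.range (n + 1), (T ^ k) (f k) ∈
        LinearMap.range (T ^ (n + 1)) := by
  obtain ⟨f, y, hfE, rfl, hy⟩ := exists_digits_of_sup_range_eq_top hsup x
  have hf : ∀ n, y 0 - ∑ k ∈ range (n + 1), (T ^ k) (f k) ∈ range (T ^ (n + 1)) := fun n =>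
    ⟨y (n + 1), by rw [eq_sum_add_pow_apply_of_eq_add_apply hy (n + 1), add_sub_cancel_left]⟩
  refine ⟨f, ⟨hfE, hf⟩, fun g ⟨hgE, hg⟩ => ?_⟩
  have hdiff := eq_zero_of_sum_pow_apply_mem_range_pow_succ (d := g - f) hinj hdisj
    (fun n => E.sub_mem (hgE n) (hfE n)) fun n => by
      simpa only [Pi.sub_apply, map_sub, sum_sub_distrib, sub_sub_sub_cancel_left]
        using Submodule.sub_mem _ (hf n) (hg n)
  exact sub_eq_zero.mp hdiff
end

section
/- Let (aₙ)_{n≥0} be a sequence of non-negative real numbers such that the set {n ∈ ℕ : aₙ > 0} is infinite and aₙ^{1/n} → 0 as n → ∞. Then there exists an infinite set A ⊆ ℕ such that aₙ > 0 for every n ∈ A and Σ_{k=n+1}^{∞} a_k = o(aₙ) as n → ∞ along n ∈ A; that is, for every ε > 0 all but finitely many n ∈ A satisfy Σ_{k>n} a_k ≤ ε·aₙ. -/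
/-!
Write `sₙ = aₙ^{1/n}`. Since `sₙ → 0` while infinitely many `sₙ` are positive, infinitely many
`n` are records from the right: `s_k ≤ sₙ` for all `k ≥ n`. For such `n`, `a_k ≤ sₙ^k` for
`k > n`, so the tail beyond `n` is at most `aₙ · sₙ / (1 - sₙ)`, which is `o(aₙ)` as `sₙ → 0`.
-/

open Filter Topology

theorem Filter.Tendsto.infinite_setOf_lt_forall_le_self {α : Type*} [LinearOrder α]
    [TopologicalSpace α] [OrderTopology α] {s : ℕ → α} {L : α}
    (hs : Tendsto s atTop (𝓝 L)) (hinf : {n | L < s n}.Infinite) :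
    {n | L < s n ∧ ∀ k, n ≤ k → s k ≤ s n}.Infinite := by
  refine Set.infinite_of_forall_exists_gt fun m => ?_
  obtain ⟨k₀, hk₀, hmk₀⟩ := hinf.exists_gt m
  have hfin : {k | s k₀ ≤ s k}.Finite := by
    have : ∀ᶠ k in cofinite, s k < s k₀ :=
      Nat.cofinite_eq_atTop ▸ hs.eventually (gt_mem_nhds hk₀)
    simpa only [not_lt] using eventually_cofinite.mp this
  -- A maximiser of `s` beyond `m` exists because only finitely many values reach `s k₀`.
  obtain ⟨n, ⟨hn, hmn⟩, hmax⟩ :=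
    Set.exists_max_image _ s (hfin.inter_of_left (Set.Ioi m)) ⟨k₀, le_rfl, hmk₀⟩
  refine ⟨n, ⟨hk₀.trans_le hn, fun k hnk => ?_⟩, hmn⟩
  by_contra! hlt
  exact (hmax k ⟨hn.trans hlt.le, hmn.trans_le hnk⟩).not_gt hlt

theorem tsum_le_mul_inv_one_sub_of_le_geometric {f : ℕ → ℝ} {c t : ℝ} (hf0 : ∀ k, 0 ≤ f k)
    (hf : ∀ k, f k ≤ c * t ^ k) (ht0 : 0 ≤ t) (ht1 : t < 1) :
    ∑' k, f k ≤ c * (1 - t)⁻¹ := by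
  have hg : Summable fun k => c * t ^ k := (summable_geometric_of_lt_one ht0 ht1).mul_left c
  calc ∑' k, f k ≤ ∑' k, c * t ^ k := (hg.of_nonneg_of_le hf0 hf).tsum_le_tsum hf hg
    _ = c * (1 - t)⁻¹ := by rw [tsum_mul_left, tsum_geometric_of_lt_one ht0 ht1]

theorem tsum_shift_le_of_forall_rpow_le {a : ℕ → ℝ} (hnonneg : ∀ n, 0 ≤ a n) {n : ℕ}
    (hn : n ≠ 0) (hmax : ∀ k, n ≤ k → a k ^ (1 / (k : ℝ)) ≤ a n ^ (1 / (n : ℝ)))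
    (hlt : a n ^ (1 / (n : ℝ)) < 1) :
    ∑' k, a (n + 1 + k) ≤ a n * (a n ^ (1 / (n : ℝ)) / (1 - a n ^ (1 / (n : ℝ)))) := by
  set t := a n ^ (1 / (n : ℝ))
  have ht0 : 0 ≤ t := Real.rpow_nonneg (hnonneg n) _
  have htn : t ^ n = a n := by
    simpa only [t, one_div] using Real.rpow_inv_natCast_pow (hnonneg n) hn
  have hbound : ∀ k, a (n + 1 + k) ≤ a n * t * t ^ k := fun k => by
    have hk : (0 : ℝ) < ↑(n + 1 + k) := by positivity
    calc a (n + 1 + k) ≤ t ^ (n + 1 + k) := by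
          rw [← Real.rpow_natCast, ← Real.rpow_inv_le_iff_of_pos (hnonneg _) ht0 hk, ← one_div]
          exact hmax _ (by omega)
      _ = t ^ n * t * t ^ k := by ring
      _ = a n * t * t ^ k := by rw [htn]
  calc ∑' k, a (n + 1 + k) ≤ a n * t * (1 - t)⁻¹ :=
        tsum_le_mul_inv_one_sub_of_le_geometric (fun k => hnonneg _) hbound ht0 hlt
    _ = a n * (t / (1 - t)) := by ring

/-- Lemma 4.1: if `(aₙ)` is a sequence of non-negative reals with infinitely many positive
terms and `aₙ^{1/n} → 0`, then there is an infinite set `A ⊆ ℕ` on which `aₙ > 0` and such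
that the tails `∑_{k>n} a_k` are `o(aₙ)` as `n → ∞` along `A`. -/
theorem exists_infinite_set_tail_little_o
    (a : ℕ → ℝ) (hnonneg : ∀ n, 0 ≤ a n)
    (hinf : {n : ℕ | 0 < a n}.Infinite)
    (hroot : Filter.Tendsto (fun n : ℕ => (a n) ^ (1 / (n : ℝ))) Filter.atTop (nhds 0)) :
    ∃ A : Set ℕ, A.Infinite ∧ (∀ n ∈ A, 0 < a n) ∧
      ∀ ε : ℝ, 0 < ε → ∃ N : ℕ, ∀ n ∈ A, N ≤ n →
        (∑' k : ℕ, a (n + 1 + k)) ≤ ε * a n := by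
  set s : ℕ → ℝ := fun n => (a n) ^ (1 / (n : ℝ))
  have hs_pos : {n | 0 < a n} ⊆ {n | 0 < s n} := fun n hn => Real.rpow_pos_of_pos hn _
  set A := {n | 0 < s n ∧ ∀ k, n ≤ k → s k ≤ s n} \ {0}
  have hA : A.Infinite := (hroot.infinite_setOf_lt_forall_le_self (hinf.mono hs_pos)).sdiff
    (Set.finite_singleton 0)
  refine ⟨A, hA, fun n ⟨⟨hsn, _⟩, hn⟩ => ?_, fun ε hε => ?_⟩
  · rw [← Real.rpow_inv_natCast_pow (hnonneg n) hn, ← one_div]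
    exact pow_pos hsn n
  have hratio : Tendsto (fun n => s n / (1 - s n)) atTop (𝓝 0) := by
    have h := hroot.div (tendsto_const_nhds.sub hroot) (by norm_num : (1 : ℝ) - 0 ≠ 0)
    rwa [sub_zero, zero_div] at h
  obtain ⟨N, hN⟩ := ((hroot.eventually (gt_mem_nhds one_pos)).and
    (hratio.eventually (ge_mem_nhds hε))).exists_forall_of_atTop
  refine ⟨N, fun n ⟨⟨_, hmax⟩, hn⟩ hNn => ?_⟩
  calc ∑' k, a (n + 1 + k) ≤ a n * (s n / (1 - s n)) :=
        tsum_shift_le_of_forall_rpow_le hnonneg hn hmax (hN n hNn).1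
    _ ≤ a n * ε := mul_le_mul_of_nonneg_left (hN n hNn).2 (hnonneg n)
    _ = ε * a n := mul_comm _ _
end

section
/- Let X be a Fréchet space over ℂ and (xₙ)_{n≥0} a linearly independent sequence in X. Then there exists a sequence (tₙ)_{n≥0} of positive real numbers such that for every sequence (bₙ)_{n≥0} of complex numbers with Σ_{n=0}^{∞} tₙ|bₙ| < ∞: (A) the series Σ_{n=0}^{∞} bₙxₙ converges absolutely in X (meaning Σ p(bₙxₙ) < ∞ for every continuous seminorm p on X, and in particular the series converges); and (B) if Σ_{n=0}^{∞} bₙxₙ = 0 then bₙ = 0 for every n. -/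
/-!
Fix an increasing sequence of continuous seminorms `p k` whose unit balls form a basis at `0`.
Linear independence makes `a ↦ ∑_{i<N} aᵢ xᵢ` an embedding of `𝕜ᴺ`, so some `p (κ N)` dominates
the coefficients on the span of `x₀, …, x_{N-1}`. With `κ` strictly increasing and
`tₙ = 1 + p (κ n) xₙ`, the condition `∑ tₙ|bₙ| < ∞` bounds every `p k (bₙxₙ)` for large `n`,
which gives absolute convergence. If moreover `∑ bₙxₙ = 0`, then for every `N > m`
`|b_m| ≤ p (κ N) (∑_{n<N} bₙxₙ) = p (κ N) (∑_{n≥N} bₙxₙ) ≤ ∑_{n≥N} tₙ|bₙ|`, which tends to `0`.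
-/

open Filter Finset Topology

section SeminormedRing

variable {𝕜 E : Type*} [SeminormedRing 𝕜] [AddCommGroup E] [Module 𝕜 E]

theorem HasSum.seminorm_le_of_bounded [TopologicalSpace E] {ι : Type*} {q : Seminorm 𝕜 E}
    (hq : Continuous q) {f : ι → E} {g : ι → ℝ} {a : E} {b : ℝ} (hf : HasSum f a)
    (hg : HasSum g b) (h : ∀ i, q (f i) ≤ g i) : q a ≤ b :=
  le_of_tendsto_of_tendsto' ((hq.tendsto a).comp hf) hg fun s =>
    (Finset.le_sum_of_subadditive q (map_zero q).le (map_add_le_add q) s f).trans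
      (Finset.sum_le_sum fun i _ => h i)

theorem Seminorm.summable_of_hasBasis_ball [UniformSpace E] [IsUniformAddGroup E] [CompleteSpace E]
    {p : ℕ → Seminorm 𝕜 E}
    (hp : (𝓝 (0 : E)).HasBasis (fun _ => True) fun k => (p k).ball 0 1) {f : ℕ → E}
    (hf : ∀ k, Summable fun n => p k (f n)) : Summable f := by
  refine summable_iff_vanishing.2 fun e he => ?_
  obtain ⟨k, -, hk⟩ := hp.mem_iff.1 he
  obtain ⟨s, hs⟩ := summable_iff_vanishing.1 (hf k) (Set.Iio 1) (Iio_mem_nhds one_pos)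
  exact ⟨s, fun u hu => hk <| (p k).mem_ball_zero.2 <|
    (Finset.le_sum_of_subadditive (p k) (map_zero _).le (map_add_le_add _) u f).trans_lt (hs u hu)⟩

theorem Seminorm.summable_of_summable_diag {p : ℕ → Seminorm 𝕜 E} (hmono : Monotone p)
    {κ : ℕ → ℕ} (hκ : Tendsto κ atTop atTop) {y : ℕ → E}
    (hy : Summable fun n => p (κ n) (y n)) (k : ℕ) : Summable fun n => p k (y n) :=
  hy.of_norm_bounded_eventually_nat <| (hκ.eventually_ge_atTop k).mono fun n hn => by
    rw [Real.norm_of_nonneg (apply_nonneg _ _)]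
    exact hmono hn _

end SeminormedRing

theorem eq_zero_of_hasSum_smul_eq_zero {𝕜 E : Type*} [NormedRing 𝕜] [AddCommGroup E] [Module 𝕜 E]
    [TopologicalSpace E] [IsTopologicalAddGroup E]
    {p : ℕ → Seminorm 𝕜 E} (hmono : Monotone p) (hcont : ∀ k, Continuous (p k))
    {x : ℕ → E} {κ : ℕ → ℕ} (hκ : Monotone κ)
    (hlow : ∀ N (a : ℕ → 𝕜), ∀ n < N, ‖a n‖ ≤ p (κ N) (∑ i ∈ range N, a i • x i))
    {b : ℕ → 𝕜} (hb : Summable fun n => p (κ n) (b n • x n))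
    (h0 : HasSum (fun n => b n • x n) 0) (n : ℕ) : b n = 0 := by
  set g := fun n => p (κ n) (b n • x n)
  have htail : ∀ N, n < N → ‖b n‖ ≤ ∑' i, g (i + N) := fun N hN =>
    calc ‖b n‖ ≤ p (κ N) (∑ i ∈ range N, b i • x i) := hlow N b n hN
      _ = p (κ N) (0 - ∑ i ∈ range N, b i • x i) := by rw [zero_sub, map_neg_eq_map]
      _ ≤ ∑' i, g (i + N) :=
        ((hasSum_nat_add_iff' N).2 h0).seminorm_le_of_bounded (hcont _)
          ((summable_nat_add_iff N).2 hb).hasSum fun i => hmono (hκ (Nat.le_add_left N i)) _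
  exact norm_le_zero_iff.1 <|
    ge_of_tendsto (tendsto_sum_nat_add g) ((eventually_gt_atTop n).mono htail)

section RCLike

variable {𝕜 E : Type*} [RCLike 𝕜] [AddCommGroup E] [Module 𝕜 E]

theorem Seminorm.le_of_ball_zero_one_subset {p q : Seminorm 𝕜 E} (h : p.ball 0 1 ⊆ q.ball 0 1) :
    q ≤ p := by
  refine Seminorm.le_def.2 fun v => le_of_forall_gt_imp_ge_of_dense fun d hd => ?_
  have hd₀ : 0 < d := (apply_nonneg p v).trans_lt hd
  have hnorm : ‖(d : 𝕜)‖ = d := by simp [hd₀.le]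
  have hsub : p.ball 0 d ⊆ q.ball 0 d := by
    have := Set.smul_set_mono (a := (d : 𝕜)) h
    rwa [Seminorm.smul_ball_zero (by simpa using hd₀.ne'), Seminorm.smul_ball_zero
      (by simpa using hd₀.ne'), hnorm, mul_one] at this
  exact ((q.mem_ball_zero).1 (hsub ((p.mem_ball_zero).2 hd))).le

open ComplexOrder in
theorem LocallyConvexSpace.of_real [Module ℝ E] [IsScalarTower ℝ 𝕜 E] [TopologicalSpace E]
    [LocallyConvexSpace ℝ E] : LocallyConvexSpace 𝕜 E :=
  ⟨fun x => by simpa only [convex_RCLike_iff_convex_real] using LocallyConvexSpace.convex_basis x⟩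

theorem exists_monotone_seminorm_hasBasis_ball [Module ℝ E] [IsScalarTower ℝ 𝕜 E]
    [TopologicalSpace E] [IsTopologicalAddGroup E] [ContinuousSMul 𝕜 E] [LocallyConvexSpace ℝ E]
    [FirstCountableTopology E] :
    ∃ p : ℕ → Seminorm 𝕜 E, Monotone p ∧
      (𝓝 (0 : E)).HasBasis (fun _ => True) fun k => (p k).ball 0 1 := by
  open ComplexOrder in
  have : LocallyConvexSpace 𝕜 E := .of_real
  have : ContinuousSMul ℝ E := IsScalarTower.continuousSMul 𝕜
  obtain ⟨V, hV, hVopen⟩ := exists_nhds_hasAntitoneBasis_absConvex_open_add_closure_subset 𝕜 E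
  let W k : AbsConvexOpenSets 𝕜 E :=
    ⟨V k, mem_of_mem_nhds (hV.mem k), (hVopen k).1, (hVopen k).2.1⟩
  refine ⟨fun k => gaugeSeminormFamily 𝕜 E (W k), fun k l hkl => Seminorm.le_def.2
    (gauge_mono (absorbent_nhds_zero (hV.mem l)) (hV.antitone hkl)), ?_⟩
  simpa only [gaugeSeminormFamily_ball] using hV.toHasBasis

theorem Seminorm.continuous_of_hasBasis_ball [TopologicalSpace E] [IsTopologicalAddGroup E]
    [ContinuousConstSMul 𝕜 E] {p : ℕ → Seminorm 𝕜 E}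
    (hp : (𝓝 (0 : E)).HasBasis (fun _ => True) fun k => (p k).ball 0 1) (k : ℕ) :
    Continuous (p k) :=
  Seminorm.continuous (hp.mem_of_mem trivial)

theorem Seminorm.exists_le_of_hasBasis_ball [TopologicalSpace E] {p : ℕ → Seminorm 𝕜 E}
    (hp : (𝓝 (0 : E)).HasBasis (fun _ => True) fun k => (p k).ball 0 1) {q : Seminorm 𝕜 E}
    (hq : Continuous q) : ∃ k, q ≤ p k := by
  obtain ⟨k, -, hk⟩ := hp.mem_iff.1 (Seminorm.ball_mem_nhds hq one_pos)
  exact ⟨k, Seminorm.le_of_ball_zero_one_subset hk⟩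

theorem Seminorm.exists_norm_le_of_hasBasis_ball [TopologicalSpace E] [IsTopologicalAddGroup E]
    [ContinuousSMul 𝕜 E] [T2Space E] {p : ℕ → Seminorm 𝕜 E}
    (hp : (𝓝 (0 : E)).HasBasis (fun _ => True) fun k => (p k).ball 0 1)
    {F : Type*} [NormedAddCommGroup F] [NormedSpace 𝕜 F] [FiniteDimensional 𝕜 F]
    {T : F →ₗ[𝕜] E} (hT : Function.Injective T) : ∃ k, ∀ a, ‖a‖ ≤ p k (T a) := by
  have hT_ind := (T.isClosedEmbedding_of_injective (LinearMap.ker_eq_bot.2 hT)).isInducing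
  have hball : Metric.ball (0 : F) 1 ∈ comap T (𝓝 0) := by
    rw [← map_zero T, ← hT_ind.nhds_eq_comap]
    exact Metric.ball_mem_nhds 0 one_pos
  obtain ⟨U, hU, hUT⟩ := hball
  obtain ⟨k, -, hk⟩ := hp.mem_iff.1 hU
  refine ⟨k, fun a => Seminorm.le_def.1
    (Seminorm.le_of_ball_zero_one_subset (p := (p k).comp T) (q := normSeminorm 𝕜 F) ?_) a⟩
  rw [Seminorm.ball_comp, map_zero, ball_normSeminorm]
  exact (Set.preimage_mono hk).trans hUT

theorem LinearIndependent.exists_strictMono_norm_le_seminorm_sum [TopologicalSpace E]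
    [IsTopologicalAddGroup E] [ContinuousSMul 𝕜 E] [T2Space E] {p : ℕ → Seminorm 𝕜 E}
    (hmono : Monotone p) (hp : (𝓝 (0 : E)).HasBasis (fun _ => True) fun k => (p k).ball 0 1)
    {x : ℕ → E} (hx : LinearIndependent 𝕜 x) :
    ∃ κ : ℕ → ℕ, StrictMono κ ∧
      ∀ N (a : ℕ → 𝕜), ∀ n < N, ‖a n‖ ≤ p (κ N) (∑ i ∈ range N, a i • x i) := by
  refine extraction_forall_of_eventually (P := fun N k => ∀ (a : ℕ → 𝕜), ∀ n < N,
    ‖a n‖ ≤ p k (∑ i ∈ range N, a i • x i)) fun N => ?_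
  have hinj : Function.Injective (Fintype.linearCombination 𝕜 fun i : Fin N => x i) :=
    linearIndependent_iff_injective_fintypeLinearCombination.1 (hx.comp _ Fin.val_injective)
  obtain ⟨k, hk⟩ := Seminorm.exists_norm_le_of_hasBasis_ball hp hinj
  filter_upwards [eventually_ge_atTop k] with l hkl a n hn
  calc ‖a n‖ ≤ ‖fun i : Fin N => a i‖ := norm_le_pi_norm (fun i : Fin N => a i) ⟨n, hn⟩
    _ ≤ p k (∑ i : Fin N, a i • x i) := by
      simpa only [Fintype.linearCombination_apply] using hk fun i => a i
    _ ≤ p l (∑ i : Fin N, a i • x i) := hmono hkl _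
    _ = p l (∑ i ∈ range N, a i • x i) := by rw [Fin.sum_univ_eq_sum_range fun i => a i • x i]

end RCLike

/-- Lemma 4.2: for any linearly independent sequence `(xₙ)` in a complex Fréchet space `X`
there are weights `tₙ > 0` such that whenever `∑ tₙ|bₙ| < ∞`, the series `∑ bₙxₙ`
converges absolutely in `X` (i.e. `∑ p(bₙxₙ) < ∞` for each continuous seminorm `p`, and
the partial sums converge), and `∑ bₙxₙ = 0` forces all `bₙ = 0`. -/
theorem exists_weights_absolutely_convergent_and_independent
    {X : Type*} [AddCommGroup X] [Module ℂ X] [UniformSpace X] [IsUniformAddGroup X]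
    [ContinuousSMul ℂ X] [CompleteSpace X] [FirstCountableTopology X] [T0Space X]
    [Module ℝ X] [IsScalarTower ℝ ℂ X] [LocallyConvexSpace ℝ X]
    (x : ℕ → X) (hx : LinearIndependent ℂ x) :
    ∃ t : ℕ → ℝ, (∀ n, 0 < t n) ∧
      ∀ b : ℕ → ℂ, Summable (fun n => t n * ‖b n‖) →
        (∀ p : Seminorm ℂ X, Continuous p → Summable fun n => p (b n • x n)) ∧
        (∃ s : X, Filter.Tendsto (fun N => ∑ n ∈ Finset.range N, b n • x n)
          Filter.atTop (nhds s)) ∧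
        (Filter.Tendsto (fun N => ∑ n ∈ Finset.range N, b n • x n)
            Filter.atTop (nhds 0) → ∀ n, b n = 0) := by
  obtain ⟨p, hmono, hp⟩ := exists_monotone_seminorm_hasBasis_ball (𝕜 := ℂ) (E := X)
  obtain ⟨κ, hκ, hlow⟩ := hx.exists_strictMono_norm_le_seminorm_sum hmono hp
  refine ⟨fun n => 1 + p (κ n) (x n), fun n => add_pos_of_pos_of_nonneg one_pos (apply_nonneg _ _),
    fun b hb => ?_⟩
  have hbx : Summable fun n => p (κ n) (b n • x n) :=
    hb.of_nonneg_of_le (fun n => apply_nonneg _ _) fun n => by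
      rw [map_smul_eq_mul, mul_comm]
      gcongr
      exact le_add_of_nonneg_left zero_le_one
  have hsum_p := Seminorm.summable_of_summable_diag hmono hκ.tendsto_atTop hbx
  have hsum : Summable fun n => b n • x n := Seminorm.summable_of_hasBasis_ball hp hsum_p
  refine ⟨fun q hq => ?_, ⟨_, hsum.hasSum.tendsto_sum_nat⟩, fun h0 => ?_⟩
  · obtain ⟨k, hk⟩ := Seminorm.exists_le_of_hasBasis_ball hp hq
    exact (hsum_p k).of_nonneg_of_le (fun n => apply_nonneg _ _) fun n => hk _
  · exact eq_zero_of_hasSum_smul_eq_zero hmono (Seminorm.continuous_of_hasBasis_ball hp)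
      hκ.monotone hlow hbx (hsum.hasSum_iff_tendsto_nat.2 h0)
end

section
/- Every infinite-dimensional Fréchet space X over ℂ has algebraic dimension (as a ℂ-vector space) at least the cardinality of the continuum 𝔠 = 2^ℵ₀. -/
/-!
By Hahn–Banach, an infinite-dimensional Hausdorff locally convex space carries a biorthogonal
sequence `(xₙ, fₙ)` with continuous `fₙ`. Completeness and a countable basis at `0` give weights
`δₙ > 0` such that `∑ cₙ xₙ` converges whenever `‖cₙ‖ ≤ δₙ`. For `0 < t < 1` the vectors
`v t = ∑ tⁿ δₙ xₙ` satisfy `fₘ (v t) = tᵐ δₘ`, so independence of the characters `n ↦ tⁿ`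
(Dedekind) makes the continuum many vectors `v t` linearly independent.
-/

open Filter Set Topology Pointwise

theorem linearIndependent_of_apply_eq_pow {R M ι : Type*} [CommRing R] [IsDomain R]
    [AddCommGroup M] [Module R M] {v : ι → M} {t : ι → R} (ht : Function.Injective t)
    (f : ℕ → M →ₗ[R] R) (hf : ∀ i m, f m (v i) = t i ^ m) : LinearIndependent R v := by
  let Φ : M →ₗ[R] Multiplicative ℕ → R := LinearMap.pi fun m => f m.toAdd
  have hΦv : Φ ∘ v = (fun χ : Multiplicative ℕ →* R => ⇑χ) ∘ powersHom R ∘ t := by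
    ext i m
    simp [Φ, hf]
  refine LinearIndependent.of_comp Φ ?_
  rw [hΦv]
  exact (linearIndependent_monoidHom _ R).comp _ ((powersHom R).injective.comp ht)

theorem Submodule.exists_forall_apply_eq_zero_notMem {R M ι : Type*} [Ring R]
    [IsNoetherianRing R] [AddCommGroup M] [Module R M] [Finite ι] (hM : ¬ Module.Finite R M)
    (φ : ι → M →ₗ[R] R) {F : Submodule R M} (hF : F.FG) : ∃ y, (∀ i, φ i y = 0) ∧ y ∉ F := by
  by_contra! hker
  have hle : LinearMap.ker (LinearMap.pi φ) ≤ F := fun y hy =>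
    hker y fun i => by simpa using congr_fun (LinearMap.mem_ker.mp hy) i
  have : Module.Finite R F := Module.Finite.iff_fg.mpr hF
  have : Module.Finite R (M ⧸ F) := ((Submodule.CoFG.ker _).of_le hle :)
  exact hM (Module.Finite.of_submodule_quotient F)

theorem LinearMap.eq_zero_of_lt_re {𝕜 M : Type*} [RCLike 𝕜] [AddCommGroup M] [Module 𝕜 M]
    (f : M →ₗ[𝕜] 𝕜) {F : Submodule 𝕜 M} {u : ℝ} (hu : ∀ y ∈ F, u < RCLike.re (f y))
    {y : M} (hy : y ∈ F) : f y = 0 := by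
  by_contra hfy
  have := hu (((u : 𝕜) / f y) • y) (F.smul_mem _ hy)
  simp [div_mul_cancel₀ _ hfy] at this

section LocallyConvex

variable {𝕜 E : Type*} [RCLike 𝕜] [AddCommGroup E] [TopologicalSpace E]
  [IsTopologicalAddGroup E] [Module 𝕜 E] [ContinuousSMul 𝕜 E] [Module ℝ E]
  [IsScalarTower ℝ 𝕜 E] [LocallyConvexSpace ℝ E]

theorem Submodule.exists_strongDual_eq_one_of_notMem {F : Submodule 𝕜 E}
    (hF : IsClosed (F : Set E)) {x : E} (hx : x ∉ F) :
    ∃ f : StrongDual 𝕜 E, f x = 1 ∧ ∀ y ∈ F, f y = 0 := by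
  obtain ⟨f, u, hfx, hfF⟩ :=
    RCLike.geometric_hahn_banach_point_closed (𝕜 := 𝕜) (F.restrictScalars ℝ).convex hF hx
  have hF0 : ∀ y ∈ F, f y = 0 := fun y hy => f.toLinearMap.eq_zero_of_lt_re hfF hy
  have hfx0 : f x ≠ 0 := by
    intro h0
    have := hfF 0 F.zero_mem
    simp only [map_zero, h0] at hfx this
    linarith
  exact ⟨(f x)⁻¹ • f, by simp [hfx0], fun y hy => by simp [hF0 y hy]⟩

variable [T2Space E]

theorem exists_strongDual_biorthogonal_seq (h : ¬ FiniteDimensional 𝕜 E) :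
    ∃ (x : ℕ → E) (f : ℕ → StrongDual 𝕜 E),
      (∀ n, f n (x n) = 1) ∧ Pairwise fun m n => f m (x n) = 0 := by
  let r : E × StrongDual 𝕜 E → E × StrongDual 𝕜 E → Prop := fun p q => p.2 q.1 = 0 ∧ q.2 p.1 = 0
  have : Std.Symm r := ⟨fun _ _ h => h.symm⟩
  have hstep (s : Finset (E × StrongDual 𝕜 E)) : ∃ q, q.2 q.1 = 1 ∧ ∀ p ∈ s, r p q := by
    classical
    let F := Submodule.span 𝕜 (s.image Prod.fst : Set E)
    have : FiniteDimensional 𝕜 F := FiniteDimensional.span_finset 𝕜 _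
    obtain ⟨y, hy0, hyF⟩ := Submodule.exists_forall_apply_eq_zero_notMem h
      (fun p : s => (p.1.2 : E →ₗ[𝕜] 𝕜)) (Submodule.fg_span (s.image Prod.fst).finite_toSet)
    obtain ⟨g, hgy, hgF⟩ := F.exists_strongDual_eq_one_of_notMem F.closed_of_finiteDimensional hyF
    exact ⟨(y, g), hgy, fun p hp => ⟨hy0 ⟨p, hp⟩,
      hgF _ (Submodule.subset_span (Finset.mem_coe.mpr (Finset.mem_image_of_mem _ hp)))⟩⟩
  obtain ⟨p, hp1, hp0⟩ :=
    exists_seq_of_forall_finset_exists' (fun p => p.2 p.1 = 1) r fun s _ => hstep s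
  exact ⟨fun n => (p n).1, fun n => (p n).2, hp1, fun m n hmn => (hp0 hmn).1⟩

end LocallyConvex

theorem sum_mem_of_mem_of_add_subset {G : Type*} [AddCommMonoid G] {u : ℕ → Set G}
    (h0 : ∀ n, (0 : G) ∈ u n) (hadd : ∀ n, u (n + 1) + u (n + 1) ⊆ u n) {a : ℕ → G}
    (ha : ∀ k, a k ∈ u (k + 1)) (t : Finset ℕ) {n : ℕ} (ht : ∀ k ∈ t, n ≤ k) :
    ∑ k ∈ t, a k ∈ u n := by
  have hu : Antitone u := antitone_nat_of_succ_le fun n x hx =>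
    hadd n (by simpa using Set.add_mem_add hx (h0 (n + 1)))
  induction t using Finset.induction_on_min generalizing n with
  | empty => simpa using h0 n
  | insert m s hms ih =>
    rw [Finset.sum_insert fun hm => (hms m hm).false]
    exact hu (ht m (Finset.mem_insert_self m s))
      (hadd m (Set.add_mem_add (ha m) (ih fun k hk => hms k hk)))

theorem exists_nhds_zero_forall_summable (G : Type*) [AddCommGroup G] [UniformSpace G]
    [IsUniformAddGroup G] [CompleteSpace G] [FirstCountableTopology G] :
    ∃ U : ℕ → Set G, (∀ n, U n ∈ 𝓝 0) ∧ ∀ a : ℕ → G, (∀ n, a n ∈ U n) → Summable a := by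
  obtain ⟨u, hu, hadd⟩ := IsTopologicalAddGroup.exists_antitone_basis_nhds_zero G
  refine ⟨fun n => u (n + 1), fun n => hu.mem (n + 1), fun a ha => ?_⟩
  refine summable_iff_vanishing.mpr fun e he => ?_
  obtain ⟨n, -, hne⟩ := hu.toHasBasis.mem_iff.mp he
  refine ⟨Finset.range n, fun t ht => hne ?_⟩
  exact sum_mem_of_mem_of_add_subset (fun n => mem_of_mem_nhds (hu.mem n)) hadd ha t
    fun k hk => by simpa using Finset.disjoint_left.mp ht hk

theorem exists_pos_forall_summable_smul {𝕜 E : Type*} [NormedField 𝕜] [AddCommGroup E]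
    [UniformSpace E] [IsUniformAddGroup E] [CompleteSpace E] [FirstCountableTopology E]
    [Module 𝕜 E] [ContinuousSMul 𝕜 E] (x : ℕ → E) :
    ∃ δ : ℕ → ℝ, (∀ n, 0 < δ n) ∧
      ∀ c : ℕ → 𝕜, (∀ n, ‖c n‖ ≤ δ n) → Summable fun n => c n • x n := by
  obtain ⟨U, hU, hsum⟩ := exists_nhds_zero_forall_summable E
  have hδ : ∀ n, ∃ δ : ℝ, 0 < δ ∧ ∀ c : 𝕜, ‖c‖ ≤ δ → c • x n ∈ U n := by
    intro n
    have hcont : Tendsto (fun c : 𝕜 => c • x n) (𝓝 0) (𝓝 0) := by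
      simpa using (tendsto_id (x := 𝓝 (0 : 𝕜))).smul_const (x n)
    obtain ⟨ε, hε, hball⟩ := Metric.eventually_nhds_iff.mp (hcont (hU n))
    exact ⟨ε / 2, half_pos hε, fun c hc => hball (by rw [dist_zero_right]; linarith)⟩
  choose δ hδpos hδU using hδ
  exact ⟨δ, hδpos, fun c hc => hsum _ fun n => hδU n (c n) (hc n)⟩

theorem StrongDual.apply_tsum_smul_of_biorthogonal {𝕜 E : Type*} [NormedField 𝕜]
    [AddCommGroup E] [TopologicalSpace E] [Module 𝕜 E] {x : ℕ → E} {f : ℕ → StrongDual 𝕜 E}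
    (hfx : ∀ n, f n (x n) = 1) (hfx0 : Pairwise fun m n => f m (x n) = 0) {c : ℕ → 𝕜}
    (hc : Summable fun n => c n • x n) (m : ℕ) : f m (∑' n, c n • x n) = c m := by
  rw [(f m).map_tsum hc, tsum_eq_single m fun n hn => by simp [hfx0 (Ne.symm hn)]]
  simp [hfx]

/-- Corollary 4.3: every infinite-dimensional Fréchet space over `ℂ` (a complete,
metrizable — first countable and `T0` — locally convex topological vector space) has
algebraic dimension at least the cardinality of the continuum. -/
theorem continuum_le_rank_of_infinite_dimensional_frechet
    {X : Type*} [AddCommGroup X] [Module ℂ X] [UniformSpace X] [IsUniformAddGroup X]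
    [ContinuousSMul ℂ X] [CompleteSpace X] [FirstCountableTopology X] [T0Space X]
    [Module ℝ X] [IsScalarTower ℝ ℂ X] [LocallyConvexSpace ℝ X]
    (h : ¬ FiniteDimensional ℂ X) :
    Cardinal.continuum ≤ Module.rank ℂ X := by
  obtain ⟨x, f, hfx, hfx0⟩ := exists_strongDual_biorthogonal_seq h
  obtain ⟨δ, hδ, hsum⟩ := exists_pos_forall_summable_smul (𝕜 := ℂ) x
  have hnorm (t : Ioo (0 : ℝ) 1) (n : ℕ) : ‖(δ n : ℂ) * (t : ℂ) ^ n‖ ≤ δ n := by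
    rw [norm_mul, Complex.norm_real, Real.norm_of_nonneg (hδ n).le, norm_pow, Complex.norm_real,
      Real.norm_of_nonneg t.2.1.le]
    exact mul_le_of_le_one_right (hδ n).le (pow_le_one₀ t.2.1.le t.2.2.le)
  have hli : LinearIndependent ℂ fun t : Ioo (0 : ℝ) 1 => ∑' n, (δ n * (t : ℂ) ^ n) • x n := by
    refine linearIndependent_of_apply_eq_pow (t := fun t : Ioo (0 : ℝ) 1 => (t : ℂ))
      (Complex.ofReal_injective.comp Subtype.val_injective)
      (fun m => ((δ m : ℂ)⁻¹ • f m : StrongDual ℂ X).toLinearMap) fun t m => ?_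
    simp only [ContinuousLinearMap.coe_coe, smul_apply, smul_eq_mul,
      StrongDual.apply_tsum_smul_of_biorthogonal hfx hfx0 (hsum _ (hnorm t)),
      inv_mul_cancel_left₀ (Complex.ofReal_ne_zero.mpr (hδ m).ne')]
  simpa [Cardinal.mk_Ioo_real zero_lt_one] using hli.cardinal_lift_le_rank
end

section
/- Let T be an injective continuous linear operator with dense range acting on a Fréchet space X over ℂ. Then the subspace X_T = ⋂_{n≥0} Tⁿ(X) is dense in X. -/
open Filter Topology Set Function Uniformity

/-! A Mittag-Leffler argument in a metric compatible with the uniformity. Starting from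
`u 0 = x`, choose `u (n + 1)` with `f (u (n + 1))` so close to `u n` that the first `n` iterates
of `f` keep them `δ n`-close (continuity of the `f^[j]` at `u n` plus density of the range).
Then for every `k` the sequence `n ↦ f^[n] (u (n + k))` is Cauchy; its limits `y k` satisfy
`f (y (k + 1)) = y k`, so `y 0 = f^[k] (y k)` lies in every range, and `y 0` is `∑ δ n`-close
to `x`. -/

theorem mem_iInter_range_iterate_of_apply_succ {α : Type*} {f : α → α} {y : ℕ → α}
    (hy : ∀ k, f (y (k + 1)) = y k) : y 0 ∈ ⋂ n, range f^[n] := by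
  have hiter : ∀ k, f^[k] (y k) = y 0 := by
    intro k
    induction k with
    | zero => rfl
    | succ k ih => rw [iterate_succ_apply, hy, ih]
  exact mem_iInter.2 fun k => ⟨y k, hiter k⟩

namespace DenseRange

variable {X : Type*} {f : X → X}

theorem exists_dist_iterate_succ_lt [PseudoMetricSpace X] (hd : DenseRange f) (hf : Continuous f)
    (x : X) (n : ℕ) {ε : ℝ} (hε : 0 < ε) :
    ∃ x', ∀ j ∈ Iic n, dist (f^[j] (f x')) (f^[j] x) < ε :=
  hd.mem_nhds <| (finite_Iic n).eventually_all.2 fun j _ =>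
    ((hf.iterate j).tendsto x).eventually (Metric.ball_mem_nhds _ hε)

theorem exists_seq_dist_iterate_succ_lt [PseudoMetricSpace X] (hd : DenseRange f)
    (hf : Continuous f) (x : X) {δ : ℕ → ℝ} (hδ : ∀ n, 0 < δ n) :
    ∃ u : ℕ → X, u 0 = x ∧
      ∀ n, ∀ j ∈ Iic n, dist (f^[j] (f (u (n + 1)))) (f^[j] (u n)) < δ n := by
  choose g hg using fun y n => hd.exists_dist_iterate_succ_lt hf y n (hδ n)
  let u : ℕ → X := fun n => Nat.rec x (fun n y => g y n) n
  exact ⟨u, rfl, fun n => hg (u n) n⟩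

theorem dense_iInter_range_iterate [MetricSpace X] [CompleteSpace X] (hd : DenseRange f)
    (hf : Continuous f) : Dense (⋂ n, range f^[n]) := by
  refine Metric.dense_iff.2 fun x r hr => ?_
  obtain ⟨u, rfl, hu⟩ := hd.exists_seq_dist_iterate_succ_lt hf x
    (δ := fun n => r / 2 / 2 / 2 ^ n) fun n => by positivity
  set v : ℕ → ℕ → X := fun k n => f^[n] (u (n + k))
  have hv : ∀ k n, dist (v k n) (v k (n + 1)) ≤ r / 2 / 2 / 2 ^ n := fun k n =>
    calc dist (v k n) (v k (n + 1))
        = dist (f^[n] (f (u (n + k + 1)))) (f^[n] (u (n + k))) := by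
          rw [dist_comm]; simp only [v, iterate_succ_apply, Nat.add_right_comm]
      _ ≤ r / 2 / 2 / 2 ^ (n + k) := (hu (n + k) n (Nat.le_add_right n k)).le
      _ ≤ r / 2 / 2 / 2 ^ n := by gcongr <;> simp
  choose y hy using fun k => cauchySeq_tendsto_of_complete (cauchySeq_of_le_geometric_two (hv k))
  have hfy : ∀ k, f (y (k + 1)) = y k := fun k => by
    have hshift : ∀ n, f (v (k + 1) n) = v k (n + 1) := fun n => by
      simp only [v, ← iterate_succ_apply' f, Nat.add_right_comm, Nat.add_assoc]
    refine tendsto_nhds_unique ((hf.tendsto _).comp (hy (k + 1))) ?_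
    simpa only [comp_def, hshift] using (hy k).comp (tendsto_add_atTop_nat 1)
  refine ⟨y 0, ?_, mem_iInter_range_iterate_of_apply_succ hfy⟩
  have hdist : dist (v 0 0) (y 0) ≤ r / 2 :=
    dist_le_of_le_geometric_two_of_tendsto₀ (hv 0) (hy 0)
  rw [Metric.mem_ball, dist_comm]
  exact hdist.trans_lt (half_lt_self hr)

end DenseRange

theorem dense_iInter_range_pow_general
    {X : Type*} [AddCommGroup X] [Module ℂ X] [UniformSpace X] [IsUniformAddGroup X]
    [CompleteSpace X] [FirstCountableTopology X] [T0Space X]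
    (T : X →ₗ[ℂ] X) (hcont : Continuous T)
    (hdense : DenseRange T) :
    Dense (⋂ n : ℕ, ((LinearMap.range (T ^ n) : Submodule ℂ X) : Set X)) := by
  have : (𝓤 X).IsCountablyGenerated := IsUniformAddGroup.uniformity_countably_generated
  let _ := UniformSpace.metricSpace X
  simpa only [LinearMap.coe_range, Module.End.coe_pow] using hdense.dense_iInter_range_iterate hcont

/-- Proposition 4.8 (density part): if `T` is an injective continuous linear operator
with dense range on a complex Fréchet space `X`, then `X_T = ⋂ₙ Tⁿ(X)` is dense in `X`. -/
theorem dense_iInter_range_pow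
    {X : Type*} [AddCommGroup X] [Module ℂ X] [UniformSpace X] [IsUniformAddGroup X]
    [ContinuousSMul ℂ X] [CompleteSpace X] [FirstCountableTopology X] [T0Space X]
    [Module ℝ X] [IsScalarTower ℝ ℂ X] [LocallyConvexSpace ℝ X]
    (T : X →ₗ[ℂ] X) (hcont : Continuous T) (hinj : Function.Injective T)
    (hdense : DenseRange T) :
    Dense (⋂ n : ℕ, ((LinearMap.range (T ^ n) : Submodule ℂ X) : Set X)) :=
  dense_iInter_range_pow_general T hcont hdense
end

section
/- Let T be a linear operator on a complex vector space X. Then T is tame if and only if for every sequence (yₙ)_{n≥0} of elements of X ∖ T(X) and every sequence (cₙ)_{n≥0} of complex numbers there exists x ∈ X such that x − Σ_{j=0}^{n} cⱼ Tʲyⱼ ∈ T^{n+1}(X) for every n ≥ 0. -/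
/-!
Tameness applied to `(cₙ • yₙ)` gives the condition at once. Conversely, if `T` is onto then every
`T^{n+1}(X)` is all of `X`; otherwise fix `y₀ ∉ T(X)` and rewrite an arbitrary sequence `(yₙ)` by
carrying: with `r₀ = 0`, if `yₙ + rₙ = T w` put `rₙ₊₁ = w`, `cₙ = 0`, `zₙ = y₀`, and otherwise
`rₙ₊₁ = 0`, `cₙ = 1`, `zₙ = yₙ + rₙ`. Then `zₙ ∉ T(X)` and `cₙ zₙ = yₙ + rₙ - T rₙ₊₁`, so the sums
`∑_{j≤n} cⱼ Tʲ zⱼ` and `∑_{j≤n} Tʲ yⱼ` telescope to the same class modulo `T^{n+1}(X)`.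
-/

/-- A linear operator `T` on a complex vector space `X` is tame if for every sequence
`(xₙ)` in `X` there is `x ∈ X` with `x ≡ ∑_{k≤n} Tᵏxₖ (mod Tⁿ⁺¹(X))` for all `n`. -/
def TameOp {X : Type*} [AddCommGroup X] [Module ℂ X] (T : X →ₗ[ℂ] X) : Prop :=
  ∀ y : ℕ → X, ∃ x : X, ∀ n : ℕ,
    x - ∑ k ∈ Finset.range (n + 1), (T ^ k) (y k) ∈ LinearMap.range (T ^ (n + 1))

open Finset

theorem sum_range_pow_apply_add_sub_apply_succ {R M : Type*} [Semiring R]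
    [AddCommGroup M] [Module R M] (T : M →ₗ[R] M) (y r : ℕ → M) (n : ℕ) :
    ∑ j ∈ range (n + 1), (T ^ j) (y j + r j - T (r (j + 1))) =
      ∑ j ∈ range (n + 1), (T ^ j) (y j) + (r 0 - (T ^ (n + 1)) (r (n + 1))) := by
  have hshift : ∀ j, (T ^ j) (T (r (j + 1))) = (T ^ (j + 1)) (r (j + 1)) := fun j => by
    rw [pow_succ, Module.End.mul_apply]
  have htel := sum_range_sub' (fun j => (T ^ j) (r j)) (n + 1)
  rw [pow_zero, Module.End.one_apply] at htel
  rw [← htel, ← sum_add_distrib]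
  refine sum_congr rfl fun j _ => ?_
  rw [map_sub, map_add, hshift]
  abel

section Tame

variable {X : Type*} [AddCommGroup X] [Module ℂ X] {T : X →ₗ[ℂ] X}

theorem TameOp.of_surjective (hT : Function.Surjective T) : TameOp T := fun y =>
  ⟨0, fun n => by
    rw [LinearMap.range_eq_top.mpr (by simpa [Module.End.coe_pow] using hT.iterate (n + 1))]
    exact Submodule.mem_top⟩

theorem exists_smul_eq_sub_apply_of_notMem_range {y₀ : X} (hy₀ : y₀ ∉ LinearMap.range T)
    (v : X) : ∃ (c : ℂ) (z w : X), z ∉ LinearMap.range T ∧ c • z = v - T w := by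
  by_cases hv : v ∈ LinearMap.range T
  · obtain ⟨w, rfl⟩ := hv
    exact ⟨0, y₀, w, hy₀, by simp⟩
  · exact ⟨1, v, 0, hv, by simp⟩

theorem TameOp.of_forall_notMem_range
    (H : ∀ y : ℕ → X, (∀ n : ℕ, y n ∉ LinearMap.range T) → ∀ c : ℕ → ℂ, ∃ x : X, ∀ n : ℕ,
      x - ∑ j ∈ range (n + 1), c j • (T ^ j) (y j) ∈ LinearMap.range (T ^ (n + 1))) :
    TameOp T := by
  by_cases hT : Function.Surjective T
  · exact .of_surjective hT
  intro y
  obtain ⟨y₀, hy₀⟩ : ∃ y₀, y₀ ∉ LinearMap.range T := by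
    simpa [LinearMap.mem_range, Function.Surjective] using hT
  choose c' z' w hz' hcw using exists_smul_eq_sub_apply_of_notMem_range hy₀
  let r : ℕ → X := fun n => Nat.rec 0 (fun m rm => w (y m + rm)) n
  obtain ⟨x, hx⟩ := H (fun n => z' (y n + r n)) (fun n => hz' _) (fun n => c' (y n + r n))
  have hr : ∀ j, w (y j + r j) = r (j + 1) := fun j => rfl
  refine ⟨x, fun n => ?_⟩
  have hsum : ∑ j ∈ range (n + 1), c' (y j + r j) • (T ^ j) (z' (y j + r j)) =
      ∑ j ∈ range (n + 1), (T ^ j) (y j) - (T ^ (n + 1)) (r (n + 1)) := by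
    simp_rw [← map_smul, hcw, hr]
    rw [sum_range_pow_apply_add_sub_apply_succ T y r n, show r 0 = 0 from rfl, zero_sub,
      ← sub_eq_add_neg]
  have hmem := Submodule.sub_mem _ (hx n) (LinearMap.mem_range_self (T ^ (n + 1)) (r (n + 1)))
  rwa [hsum, sub_sub, sub_add_cancel] at hmem

end Tame

/-- Lemma 5.1: `T` is tame if and only if for every sequence `(yₙ)` of elements of
`X ∖ T(X)` and every sequence `(cₙ)` of complex numbers there is `x ∈ X` with
`x ≡ ∑_{j≤n} cⱼTʲyⱼ (mod Tⁿ⁺¹(X))` for all `n`. -/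
theorem tame_iff_outside_range
    {X : Type*} [AddCommGroup X] [Module ℂ X] (T : X →ₗ[ℂ] X) :
    TameOp T ↔
      ∀ y : ℕ → X, (∀ n : ℕ, y n ∉ LinearMap.range T) → ∀ c : ℕ → ℂ, ∃ x : X, ∀ n : ℕ,
        x - ∑ j ∈ Finset.range (n + 1), c j • (T ^ j) (y j) ∈
          LinearMap.range (T ^ (n + 1)) := by
  refine ⟨fun hT y _ c => ?_, TameOp.of_forall_notMem_range⟩
  obtain ⟨x, hx⟩ := hT (fun n => c n • y n)
  exact ⟨x, fun n => by simpa only [map_smul] using hx n⟩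
end

section
/- Let X be a Fréchet space over ℂ and T : X → X an injective continuous linear operator such that the subspace ⋂_{n≥0} Tⁿ(X) is dense in X. Then T is tame. -/
/-!
Let `D = ⋂ₙ Tⁿ(X)`. By density, each `xₖ` can be moved by some `cₖ ∈ D` so that `Tʲ(xₖ + cₖ)`
lies in the `k`-th member `Uₖ` of a fixed antitone sequence of neighbourhoods of `0` for all
`j ≤ k`. Completeness and a halving basis (`Uₖ₊₁ + Uₖ₊₁ ⊆ Uₖ`) make every series
`∑ₖ Tᵏ(x_{m+k} + c_{m+k})` converge. Then `x = ∑ₖ Tᵏ(xₖ + cₖ)` works: its tail after `n + 1`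
terms is `Tⁿ⁺¹` applied to the series with `m = n + 1`, and the corrections `Tᵏcₖ` lie in
`D ⊆ Tⁿ⁺¹(X)`.
-/

open Filter Topology Finset Pointwise

theorem Finset.sum_mem_of_add_succ_subset {X : Type*} [AddCommMonoid X] {u : ℕ → Set X}
    (hanti : Antitone u) (hzero : ∀ i, (0 : X) ∈ u i) (hadd : ∀ i, u (i + 1) + u (i + 1) ⊆ u i)
    {f : ℕ → X} (hf : ∀ k, f k ∈ u (k + 1)) {t : Finset ℕ} {m : ℕ} (ht : ∀ k ∈ t, m ≤ k) :
    ∑ k ∈ t, f k ∈ u m := by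
  induction t using Finset.induction_on_min generalizing m with
  | empty => simpa using hzero m
  | insert a s has ih =>
    have hma : m ≤ a := ht a (mem_insert_self a s)
    rw [sum_insert fun h => lt_irrefl a (has a h)]
    refine hadd m (Set.add_mem_add (hanti (by omega) (hf a)) ?_)
    exact hanti (by omega) (ih fun k hk => has k hk)

theorem exists_antitone_nhds_zero_forall_summable (X : Type*) [AddCommGroup X] [UniformSpace X]
    [IsUniformAddGroup X] [CompleteSpace X] [FirstCountableTopology X] :
    ∃ U : ℕ → Set X, (∀ k, U k ∈ 𝓝 0) ∧ Antitone U ∧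
      ∀ f : ℕ → X, (∀ k, f k ∈ U k) → Summable f := by
  obtain ⟨u, hu, hadd⟩ := IsTopologicalAddGroup.exists_antitone_basis_nhds_zero X
  refine ⟨fun k => u (k + 1), fun k => hu.mem (k + 1),
    fun i j hij => hu.antitone (Nat.succ_le_succ hij),
    fun f hf => summable_iff_vanishing.2 fun e he => ?_⟩
  obtain ⟨m, hm⟩ := hu.mem_iff.1 he
  refine ⟨range m, fun t ht => hm ?_⟩
  refine sum_mem_of_add_succ_subset hu.antitone (fun i => mem_of_mem_nhds (hu.mem i)) hadd hf
    fun k hk => ?_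
  simpa using disjoint_left.1 ht hk

theorem LinearMap.pow_apply_mem_range_pow {R X : Type*} [Semiring R] [AddCommGroup X]
    [Module R X] {T : X →ₗ[R] X} {c : X} {n : ℕ} (hc : c ∈ LinearMap.range (T ^ n)) (k : ℕ) :
    (T ^ k) c ∈ LinearMap.range (T ^ n) := by
  obtain ⟨v, rfl⟩ := hc
  exact ⟨(T ^ k) v, by rw [← Module.End.mul_apply, ← Module.End.mul_apply,
    (Commute.pow_pow_self T n k).eq]⟩

section Operator

variable {R X : Type*} [Semiring R] [AddCommGroup X] [Module R X] [TopologicalSpace X]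
  {T : X →ₗ[R] X}

theorem LinearMap.continuous_pow (hT : Continuous T) (n : ℕ) : Continuous (T ^ n) := by
  rw [Module.End.coe_pow]
  exact hT.iterate n

theorem Dense.exists_mem_forall_pow_apply_add_mem [ContinuousAdd X] (hT : Continuous T)
    {D : Set X} (hD : Dense D) (y : X) {U : Set X} (hU : U ∈ 𝓝 0) (k : ℕ) :
    ∃ c ∈ D, ∀ j ≤ k, (T ^ j) (y + c) ∈ U := by
  have hnhds : ∀ᶠ c in 𝓝 (-y), ∀ j ∈ Set.Iic k, (T ^ j) (y + c) ∈ U := by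
    refine (eventually_all_finite (Set.finite_Iic k)).2 fun j _ => ?_
    have hcont : Continuous fun c => (T ^ j) (y + c) :=
      (LinearMap.continuous_pow hT j).comp (continuous_const.add continuous_id)
    exact hcont.continuousAt.preimage_mem_nhds (by simpa using hU)
  obtain ⟨c, hcD, hc⟩ := hD.inter_nhds_nonempty hnhds
  exact ⟨c, hcD, hc⟩

theorem tsum_sub_sum_range_mem_range_pow [IsTopologicalAddGroup X] [T2Space X]
    (hT : Continuous T) {v : ℕ → X} (hv : ∀ m, Summable fun k => (T ^ k) (v (m + k))) (n : ℕ) :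
    ∑' k, (T ^ k) (v k) - ∑ k ∈ range n, (T ^ k) (v k) ∈ LinearMap.range (T ^ n) := by
  obtain ⟨L, hL⟩ := hv n
  have htail : HasSum (fun k => (T ^ (k + n)) (v (k + n))) ((T ^ n) L) := by
    convert hL.map (T ^ n) (LinearMap.continuous_pow hT n) using 2 with k
    rw [Function.comp_apply, ← Module.End.mul_apply, ← pow_add, add_comm n k]
  have hsum : HasSum (fun k => (T ^ k) (v k)) (∑' k, (T ^ k) (v k)) := by
    simpa using (hv 0).hasSum
  exact ⟨L, htail.unique ((hasSum_nat_add_iff' n).2 hsum)⟩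

end Operator

theorem tame_of_dense_iInter_general
    {X : Type*} [AddCommGroup X] [Module ℂ X] [UniformSpace X] [IsUniformAddGroup X]
    [CompleteSpace X] [FirstCountableTopology X] [T0Space X]
    (T : X →ₗ[ℂ] X) (hcont : Continuous T)
    (hdense : Dense (⋂ n : ℕ, ((LinearMap.range (T ^ n) : Submodule ℂ X) : Set X))) :
    TameOp T := by
  intro y
  obtain ⟨U, hU, hUanti, hsummable⟩ := exists_antitone_nhds_zero_forall_summable X
  choose c hcD hcU using fun k => hdense.exists_mem_forall_pow_apply_add_mem hcont (y k) (hU k) k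
  have hsum : ∀ m, Summable fun k => (T ^ k) (y (m + k) + c (m + k)) := fun m =>
    hsummable _ fun k => hUanti (Nat.le_add_left k m) (hcU (m + k) k (Nat.le_add_left k m))
  refine ⟨∑' k, (T ^ k) (y k + c k), fun n => ?_⟩
  have hcorr : ∑ k ∈ range (n + 1), (T ^ k) (c k) ∈ LinearMap.range (T ^ (n + 1)) :=
    Submodule.sum_mem _ fun k _ =>
      LinearMap.pow_apply_mem_range_pow (Set.mem_iInter.1 (hcD k) (n + 1)) k
  have htail :=
    tsum_sub_sum_range_mem_range_pow (v := fun k => y k + c k) hcont hsum (n + 1)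
  convert add_mem htail hcorr using 1
  simp only [map_add, sum_add_distrib]
  abel

/-- Lemma 5.6: an injective continuous linear operator `T` on a complex Fréchet space `X`
such that `⋂ₙ Tⁿ(X)` is dense in `X` is tame. -/
theorem tame_of_dense_iInter
    {X : Type*} [AddCommGroup X] [Module ℂ X] [UniformSpace X] [IsUniformAddGroup X]
    [ContinuousSMul ℂ X] [CompleteSpace X] [FirstCountableTopology X] [T0Space X]
    [Module ℝ X] [IsScalarTower ℝ ℂ X] [LocallyConvexSpace ℝ X]
    (T : X →ₗ[ℂ] X) (hcont : Continuous T) (hinj : Function.Injective T)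
    (hdense : Dense (⋂ n : ℕ, ((LinearMap.range (T ^ n) : Submodule ℂ X) : Set X))) :
    TameOp T :=
  tame_of_dense_iInter_general T hcont hdense
end

section
/- Let X be a Fréchet space over ℂ and T : X → X an injective continuous linear operator such that there exists m ∈ ℕ for which the closure of T^m(X) equals the closure of T^{m+1}(X). Then T is tame. -/
/-!
It suffices to solve the backward recurrence `w n = z n + T (w (n + 1))` for every sequence `z`:
then `x = y₀ + T w₀` with `z n = y (n + 1)` satisfies `x - ∑_{k ≤ n} Tᵏ yₖ = Tⁿ⁺¹ (w n)`.
Subtracting the finite tails `∑_{j < m} Tʲ z (n + j)` reduces this to sequences `z` with values in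
`S = Tᵐ(X)`, and the hypothesis says exactly that `S ⊆ closure (T S)`. Using this density, choose
`c n ∈ S` recursively so that `a n = z n + c n - T c (n + 1)` is small under `T⁰, …, Tⁿ`, in the
sense of a sequence of neighbourhoods `U` of `0` with `U (j + 1) + U (j + 1) ⊆ U j`. Then the
series `Q n = ∑ᵢ Tⁱ a (n + i)` converge by completeness, `Q n = a n + T Q (n + 1)`, and
`w = Q - c` solves the recurrence.
-/

open Filter Topology

structure IsHalvingSeq {X : Type*} [AddCommGroup X] (U : ℕ → Set X) : Prop where
  zero_mem : ∀ j, (0 : X) ∈ U j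
  add_mem : ∀ j, ∀ a ∈ U (j + 1), ∀ b ∈ U (j + 1), a + b ∈ U j

namespace IsHalvingSeq

variable {X : Type*} [AddCommGroup X] {U : ℕ → Set X}

theorem antitone (hU : IsHalvingSeq U) : Antitone U :=
  antitone_nat_of_succ_le fun j a ha => by
    simpa using hU.add_mem j a ha 0 (hU.zero_mem (j + 1))

theorem sum_mem (hU : IsHalvingSeq U) {g : ℕ → X} (hg : ∀ i, g i ∈ U (i + 1)) (t : Finset ℕ) :
    ∀ q, (∀ i ∈ t, q ≤ i) → ∑ i ∈ t, g i ∈ U q := by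
  induction t using Finset.induction_on_min with
  | empty => exact fun q _ => by simpa using hU.zero_mem q
  | insert a s has ih =>
    intro q hq
    have hqa : q ≤ a := hq a (Finset.mem_insert_self a s)
    rw [Finset.sum_insert fun ha => (has a ha).false]
    exact hU.antitone hqa (hU.add_mem a _ (hg a) _ (ih (a + 1) fun i hi => has i hi))

theorem summable [UniformSpace X] [IsUniformAddGroup X] [CompleteSpace X]
    (hU : IsHalvingSeq U) (hbasis : (𝓝 (0 : X)).HasBasis (fun _ => True) U) {g : ℕ → X}
    (hg : ∀ i, g i ∈ U (i + 1)) : Summable g := by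
  refine summable_iff_vanishing.2 fun e he => ?_
  obtain ⟨k, -, hk⟩ := hbasis.mem_iff.1 he
  refine ⟨Finset.range k, fun t ht => hk (hU.sum_mem hg t k fun i hi => ?_)⟩
  simpa using Finset.disjoint_left.1 ht hi

end IsHalvingSeq

section TopologicalAddGroup

variable {X : Type*} [AddCommGroup X] [TopologicalSpace X] [IsTopologicalAddGroup X]

theorem exists_isHalvingSeq_nhds_zero_basis [FirstCountableTopology X] :
    ∃ U : ℕ → Set X, (𝓝 (0 : X)).HasBasis (fun _ => True) U ∧ IsHalvingSeq U := by
  obtain ⟨V, hV⟩ := (𝓝 (0 : X)).exists_antitone_basis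
  choose half hhalf using fun s : {s : Set X // s ∈ 𝓝 0} => exists_nhds_zero_half s.2
  let U' : ℕ → {s : Set X // s ∈ 𝓝 0} := fun n =>
    Nat.rec ⟨V 0, hV.mem 0⟩
      (fun j s => ⟨half s ∩ V (j + 1), inter_mem (hhalf s).1 (hV.mem (j + 1))⟩) n
  have hU'V : ∀ j, (U' j).1 ⊆ V j := by
    intro j
    cases j with
    | zero => exact subset_rfl
    | succ j => exact Set.inter_subset_right
  refine ⟨fun j => (U' j).1, hV.toHasBasis.to_hasBasis' (fun j _ => ⟨j, trivial, hU'V j⟩)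
    (fun j _ => (U' j).2), fun j => mem_of_mem_nhds (U' j).2, fun j a ha b hb => ?_⟩
  exact (hhalf (U' j)).2 a ha.1 b hb.1

theorem exists_forall_iterate_sub_mem_of_mem_closure_image {T : X →+ X} (hT : Continuous T)
    {S : Set X} {e : X} (he : e ∈ closure (T '' S)) {V : Set X} (hV : V ∈ 𝓝 0) (j : ℕ) :
    ∃ z ∈ S, ∀ i ≤ j, T^[i] (e - T z) ∈ V := by
  have hnear : ∀ᶠ u in 𝓝 e, ∀ i ∈ Finset.range (j + 1), T^[i] (e - u) ∈ V := by
    refine (Finset.eventually_all _).2 fun i _ => ?_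
    have hcont : Continuous fun u => T^[i] (e - u) := (hT.iterate i).comp (continuous_sub_left e)
    exact hcont.continuousAt.preimage_mem_nhds (by simpa [iterate_map_zero] using hV)
  obtain ⟨_, hu, z, hz, rfl⟩ := mem_closure_iff_nhds.1 he _ hnear
  exact ⟨z, hz, fun i hi => hu i (Finset.mem_range_succ_iff.2 hi)⟩

theorem exists_eq_add_map_succ_of_summable [T2Space X] {T : X →+ X} (hT : Continuous T)
    {a : ℕ → X} (ha : ∀ n, Summable fun i => T^[i] (a (n + i))) :
    ∃ Q : ℕ → X, ∀ n, Q n = a n + T (Q (n + 1)) := by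
  refine ⟨fun n => ∑' i, T^[i] (a (n + i)), fun n => ?_⟩
  dsimp only
  rw [(ha n).tsum_eq_zero_add, (ha (n + 1)).map_tsum T hT]
  simp only [Function.iterate_succ_apply', Function.iterate_zero_apply, add_zero,
    ← Nat.add_assoc, Nat.add_right_comm _ _ 1]

end TopologicalAddGroup

theorem exists_eq_add_map_succ_of_subset_closure_image {X : Type*} [AddCommGroup X]
    [UniformSpace X] [IsUniformAddGroup X] [CompleteSpace X] [T2Space X] [FirstCountableTopology X]
    {T : X →+ X} (hT : Continuous T) {S : AddSubmonoid X} (hS : (S : Set X) ⊆ closure (T '' S))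
    {b : ℕ → X} (hb : ∀ n, b n ∈ S) :
    ∃ w : ℕ → X, ∀ n, w n = b n + T (w (n + 1)) := by
  obtain ⟨U, hUbasis, hU⟩ := exists_isHalvingSeq_nhds_zero_basis (X := X)
  have hstep : ∀ (j : ℕ) (z : S), ∃ z' : S, ∀ i ≤ j, T^[i] (b j + z - T z') ∈ U (j + 1) := by
    intro j z
    obtain ⟨z', hz', h⟩ := exists_forall_iterate_sub_mem_of_mem_closure_image hT
      (hS (S.add_mem (hb j) z.2)) (hUbasis.mem_of_mem trivial) j
    exact ⟨⟨z', hz'⟩, h⟩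
  choose next hnext using hstep
  let c : ℕ → S := fun n => Nat.rec (motive := fun _ => S) 0 next n
  let a : ℕ → X := fun j => b j + c j - T (c (j + 1))
  have ha_mem : ∀ n i, T^[i] (a (n + i)) ∈ U (i + 1) := fun n i =>
    hU.antitone (by omega) (hnext (n + i) (c (n + i)) i (Nat.le_add_left i n))
  obtain ⟨Q, hQ⟩ := exists_eq_add_map_succ_of_summable hT fun n =>
    hU.summable hUbasis (ha_mem n)
  refine ⟨fun n => Q n - c n, fun n => ?_⟩
  simp only [hQ n, a, map_sub]
  abel

theorem tameOp_of_forall_exists_eq_add_map_succ {X : Type*} [AddCommGroup X] [Module ℂ X]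
    (T : X →ₗ[ℂ] X) (h : ∀ z : ℕ → X, ∃ w : ℕ → X, ∀ n, w n = z n + T (w (n + 1))) :
    TameOp T := by
  intro y
  obtain ⟨w, hw⟩ := h fun n => y (n + 1)
  refine ⟨y 0 + T (w 0), fun n => ⟨w n, ?_⟩⟩
  induction n with
  | zero => simp [pow_one]
  | succ n ih =>
    rw [Finset.sum_range_succ, ← sub_sub, ← ih, hw n, map_add, pow_succ, Module.End.mul_apply]
    abel

theorem exists_eq_add_map_succ_of_range_pow {R M : Type*} [Semiring R] [AddCommGroup M]
    [Module R M] (T : M →ₗ[R] M) (m : ℕ)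
    (h : ∀ b : ℕ → M, (∀ n, b n ∈ LinearMap.range (T ^ m)) →
      ∃ w : ℕ → M, ∀ n, w n = b n + T (w (n + 1)))
    (z : ℕ → M) : ∃ w : ℕ → M, ∀ n, w n = z n + T (w (n + 1)) := by
  set p : ℕ → M := fun n => ∑ j ∈ Finset.range m, T^[j] (z (n + j)) with hp
  have hp_rec : ∀ n, p n + T^[m] (z (n + m)) = z n + T (p (n + 1)) := fun n => by
    rw [hp, ← Finset.sum_range_succ (fun j => T^[j] (z (n + j))), Finset.sum_range_succ',
      map_sum, add_comm]
    simp only [Function.iterate_succ_apply', Function.iterate_zero_apply, add_zero,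
      ← Nat.add_assoc, Nat.add_right_comm _ _ 1]
  obtain ⟨w, hw⟩ := h (fun n => T^[m] (z (n + m))) fun n =>
    ⟨z (n + m), Module.End.pow_apply T m _⟩
  refine ⟨p + w, fun n => ?_⟩
  simp only [Pi.add_apply, map_add]
  rw [hw n, ← add_assoc, hp_rec n, add_assoc]

theorem range_pow_subset_closure_image {R M : Type*} [Semiring R] [AddCommMonoid M] [Module R M]
    [TopologicalSpace M] {T : M →ₗ[R] M} {m : ℕ}
    (hm : closure ((LinearMap.range (T ^ m) : Submodule R M) : Set M) =
      closure ((LinearMap.range (T ^ (m + 1)) : Submodule R M) : Set M)) :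
    (LinearMap.range (T ^ m) : Set M) ⊆ closure (T '' LinearMap.range (T ^ m)) := by
  have himage : T '' LinearMap.range (T ^ m) = LinearMap.range (T ^ (m + 1)) := by
    simp only [LinearMap.coe_range, Module.End.coe_pow, Function.iterate_succ', Set.range_comp]
  rw [himage, ← hm]
  exact subset_closure

theorem tame_of_closure_range_pow_eq_general
    {X : Type*} [AddCommGroup X] [Module ℂ X] [UniformSpace X] [IsUniformAddGroup X]
    [CompleteSpace X] [FirstCountableTopology X] [T0Space X]
    (T : X →ₗ[ℂ] X) (hcont : Continuous T)
    (hm : ∃ m : ℕ, closure ((LinearMap.range (T ^ m) : Submodule ℂ X) : Set X) =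
      closure ((LinearMap.range (T ^ (m + 1)) : Submodule ℂ X) : Set X)) :
    TameOp T := by
  obtain ⟨m, hm⟩ := hm
  refine tameOp_of_forall_exists_eq_add_map_succ T (exists_eq_add_map_succ_of_range_pow T m ?_)
  exact fun b hb => exists_eq_add_map_succ_of_subset_closure_image (T := T.toAddMonoidHom) hcont
    (S := (LinearMap.range (T ^ m)).toAddSubmonoid) (range_pow_subset_closure_image hm) hb

/-- Proposition 5.7: an injective continuous linear operator `T` on a complex Fréchet
space `X` such that `closure(Tᵐ(X)) = closure(Tᵐ⁺¹(X))` for some `m` is tame. -/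
theorem tame_of_closure_range_pow_eq
    {X : Type*} [AddCommGroup X] [Module ℂ X] [UniformSpace X] [IsUniformAddGroup X]
    [ContinuousSMul ℂ X] [CompleteSpace X] [FirstCountableTopology X] [T0Space X]
    [Module ℝ X] [IsScalarTower ℝ ℂ X] [LocallyConvexSpace ℝ X]
    (T : X →ₗ[ℂ] X) (hcont : Continuous T) (hinj : Function.Injective T)
    (hm : ∃ m : ℕ, closure ((LinearMap.range (T ^ m) : Submodule ℂ X) : Set X) =
      closure ((LinearMap.range (T ^ (m + 1)) : Submodule ℂ X) : Set X)) :
    TameOp T :=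
  tame_of_closure_range_pow_eq_general T hcont hm
end

section
/- Let T be an injective bounded linear operator on a complex Banach space X. Then T is tame if and only if there exists m ∈ ℕ such that the closure of T^m(X) equals the closure of T^{m+1}(X). -/
open Filter Metric Finset Topology

namespace Module.End

section AddCommMonoid

variable {R M : Type*} [Semiring R] [AddCommMonoid M] [Module R M]

theorem range_pow_succ_le (T : Module.End R M) (n : ℕ) :
    LinearMap.range (T ^ (n + 1)) ≤ LinearMap.range (T ^ n) := by
  rw [pow_succ, mul_eq_comp]
  exact LinearMap.range_comp_le_range _ _

theorem closure_range_pow_eq_succ_iff [TopologicalSpace M] (T : Module.End R M) (m : ℕ) :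
    closure (LinearMap.range (T ^ m) : Set M) = closure (LinearMap.range (T ^ (m + 1)) : Set M) ↔
      ∀ a, (T ^ m) a ∈ closure (LinearMap.range (T ^ (m + 1)) : Set M) := by
  refine ⟨fun h a => h ▸ subset_closure ⟨a, rfl⟩, fun h => ?_⟩
  exact (closure_minimal (by rintro _ ⟨a, rfl⟩; exact h a) isClosed_closure).antisymm
    (closure_mono (range_pow_succ_le T m))

end AddCommMonoid

section TopologicalAddGroup

variable {R M : Type*} [Semiring R] [AddCommGroup M] [Module R M] [TopologicalSpace M]
  [IsTopologicalAddGroup M]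

theorem exists_pow_apply_add_apply_mem (T : Module.End R M) {m : ℕ} {b : M}
    (hb : (T ^ m) b ∈ closure (LinearMap.range (T ^ (m + 1)) : Set M)) {U : Set M}
    (hU : U ∈ 𝓝 0) : ∃ s, (T ^ m) (b + T s) ∈ U := by
  obtain ⟨_, ⟨s, rfl⟩, hs⟩ := mem_closure_iff_nhds_zero.1 hb (-U) (neg_mem_nhds_zero M hU)
  refine ⟨-s, ?_⟩
  rw [Set.mem_neg, neg_sub, pow_succ, mul_apply, ← map_sub] at hs
  rwa [map_neg, ← sub_eq_add_neg]

end TopologicalAddGroup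

end Module.End

theorem tameOp_of_forall_exists_eq_add_apply_succ {X : Type*} [AddCommGroup X] [Module ℂ X]
    (T : X →ₗ[ℂ] X) (h : ∀ u : ℕ → X, ∃ v : ℕ → X, ∀ n, v n = u n + T (v (n + 1))) :
    TameOp T := by
  intro y
  obtain ⟨v, hv⟩ := h fun n => y (n + 1)
  refine ⟨y 0 + T (v 0), fun n => ⟨v n, ?_⟩⟩
  induction n with
  | zero => simp
  | succ n ih =>
    rw [sum_range_succ, ← sub_sub, ← ih, hv n, map_add, add_sub_cancel_left, pow_succ,
      Module.End.mul_apply]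

theorem norm_mul_infDist_le_norm {𝕜 E : Type*} [NormedField 𝕜] [SeminormedAddCommGroup E]
    [NormedSpace 𝕜 E] (C : Submodule 𝕜 E) {c : 𝕜} {v w : E} (h : c • v - w ∈ C) :
    ‖c‖ * infDist v C ≤ ‖w‖ := by
  rcases eq_or_ne c 0 with rfl | hc
  · simp
  have hmem : v - c⁻¹ • w ∈ C := by
    simpa [smul_sub, inv_smul_smul₀ hc] using C.smul_mem c⁻¹ h
  calc ‖c‖ * infDist v C ≤ ‖c‖ * dist v (v - c⁻¹ • w) := by
        gcongr; exact infDist_le_dist_of_mem hmem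
    _ = ‖w‖ := by
      rw [dist_self_sub_right, norm_smul, norm_inv, mul_inv_cancel_left₀ (norm_ne_zero_iff.2 hc)]

theorem exists_add_sum_le_mul (b d : ℕ → ℝ) (hd : ∀ n, 0 < d n) :
    ∃ c : ℕ → ℝ, ∀ n : ℕ, n + ∑ k ∈ range (n + 1), |c k| * b k ≤ c (n + 1) * d (n + 1) := by
  let P : ℕ → ℝ := fun n => Nat.rec 0 (fun n p => p + |(n + p) / d (n + 1)| * b (n + 1)) n
  let c : ℕ → ℝ := fun
    | 0 => 0
    | n + 1 => (n + P n) / d (n + 1)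
  have hP : ∀ n, ∑ k ∈ range (n + 1), |c k| * b k = P n := by
    intro n
    induction n with
    | zero => simp [c, P]
    | succ n ih => rw [sum_range_succ, ih]
  exact ⟨c, fun n => by rw [hP]; exact (div_mul_cancel₀ _ (hd (n + 1)).ne').ge⟩

theorem not_tameOp_of_forall_infDist_pos {X : Type*} [NormedAddCommGroup X] [NormedSpace ℂ X]
    (T : X →ₗ[ℂ] X) (a : ℕ → X)
    (ha : ∀ n, 0 < infDist ((T ^ n) (a n)) (LinearMap.range (T ^ (n + 1)))) : ¬ TameOp T := by
  intro htame
  obtain ⟨c, hc⟩ := exists_add_sum_le_mul (fun n => ‖(T ^ n) (a n)‖) _ ha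
  obtain ⟨x, hx⟩ := htame fun n => (c n : ℂ) • a n
  set S : ℕ → X := fun n => ∑ k ∈ range (n + 1), (T ^ k) ((c k : ℂ) • a k)
  have hS : ∀ n, ‖S n‖ ≤ ∑ k ∈ range (n + 1), |c k| * ‖(T ^ k) (a k)‖ := fun n =>
    (norm_sum_le _ _).trans_eq <| sum_congr rfl fun k _ => by
      rw [map_smul, norm_smul, Complex.norm_real, Real.norm_eq_abs]
  have hfar : ∀ n, c (n + 1) * infDist ((T ^ (n + 1)) (a (n + 1)))
      (LinearMap.range (T ^ (n + 1 + 1))) ≤ ‖x - S n‖ := by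
    intro n
    have hmem : (c (n + 1) : ℂ) • (T ^ (n + 1)) (a (n + 1)) - (x - S n) ∈
        LinearMap.range (T ^ (n + 1 + 1)) := by
      convert neg_mem (hx (n + 1)) using 1
      rw [sum_range_succ, map_smul]
      abel
    calc _ ≤ ‖(c (n + 1) : ℂ)‖ * infDist ((T ^ (n + 1)) (a (n + 1)))
          (LinearMap.range (T ^ (n + 1 + 1))) := by
          rw [Complex.norm_real, Real.norm_eq_abs]
          exact mul_le_mul_of_nonneg_right (le_abs_self _) infDist_nonneg
      _ ≤ ‖x - S n‖ := norm_mul_infDist_le_norm _ hmem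
  obtain ⟨n, hn⟩ := exists_nat_gt ‖x‖
  linarith [hc n, hfar n, hS n, norm_sub_le x (S n)]

theorem TameOp.exists_closure_range_pow_eq {X : Type*} [NormedAddCommGroup X]
    [NormedSpace ℂ X] (T : X →ₗ[ℂ] X) (hT : TameOp T) :
    ∃ m, closure (LinearMap.range (T ^ m) : Set X) =
      closure (LinearMap.range (T ^ (m + 1)) : Set X) := by
  by_contra! h
  choose a ha using fun m =>
    not_forall.1 (mt (Module.End.closure_range_pow_eq_succ_iff T m).2 (h m))
  refine not_tameOp_of_forall_infDist_pos T a (fun n => ?_) hT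
  rw [← infDist_closure]
  exact (isClosed_closure.notMem_iff_infDist_pos ⟨0, subset_closure (zero_mem _)⟩).1 (ha n)

section Series

variable {R X : Type*} [Semiring R] [NormedAddCommGroup X] [Module R X]

/- Bounding `Tⁱ` of the defect for all `i ≤ N`, not only for `i = 0`, makes `∑ⱼ Tʲδₙ₊ⱼ` summable
without any estimate on `‖Tⁱ‖`. -/
theorem exists_seq_forall_norm_pow_apply_le (T : Module.End R X) (hT : Continuous T) {m : ℕ}
    (hm : ∀ b, (T ^ m) b ∈ closure (LinearMap.range (T ^ (m + 1)) : Set X)) (u : ℕ → X) :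
    ∃ t : ℕ → X, ∀ N, ∀ i ≤ N,
      ‖(T ^ i) ((T ^ m) (u N + T (t (N + 1)) - t N))‖ ≤ (1 / 2) ^ N := by
  have hU : ∀ N, {z : X | ∀ i ≤ N, ‖(T ^ i) z‖ ≤ (1 / 2 : ℝ) ^ N} ∈ 𝓝 0 := by
    intro N
    refine (eventually_all_finite (Set.finite_Iic N)).2 fun i _ => ?_
    have hc : Continuous (T ^ i) := Module.End.coe_pow T i ▸ hT.iterate i
    have : Tendsto (fun z => ‖(T ^ i) z‖) (𝓝 0) (𝓝 0) := by
      simpa using hc.norm.tendsto 0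
    exact this.eventually (ge_mem_nhds (by positivity))
  choose s hs using fun N b => T.exists_pow_apply_add_apply_mem (hm b) (hU N)
  let t : ℕ → X := fun N => Nat.rec 0 (fun N tN => s N (u N - tN)) N
  refine ⟨t, fun N => ?_⟩
  have e : u N + T (t (N + 1)) - t N = u N - t N + T (s N (u N - t N)) :=
    (sub_add_eq_add_sub ..).symm
  rw [e]
  exact hs N (u N - t N)

theorem summable_pow_apply_of_norm_pow_apply_le [CompleteSpace X] (T : Module.End R X) {m : ℕ}
    {δ : ℕ → X} (hδ : ∀ N, ∀ i ≤ N, ‖(T ^ i) ((T ^ m) (δ N))‖ ≤ (1 / 2) ^ N) (n : ℕ) :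
    Summable fun j => (T ^ j) (δ (n + j)) := by
  rw [← summable_nat_add_iff m]
  refine Summable.of_norm_bounded summable_geometric_two fun j => ?_
  rw [pow_add, Module.End.mul_apply, ← add_assoc]
  exact (hδ _ j (by omega)).trans (pow_le_pow_of_le_one (by norm_num) (by norm_num) (by omega))

theorem exists_eq_add_apply_succ_of_summable (T : Module.End R X) (hT : Continuous T)
    (u t : ℕ → X)
    (hs : ∀ n, Summable fun j => (T ^ j) (u (n + j) + T (t (n + j + 1)) - t (n + j))) :
    ∃ v : ℕ → X, ∀ n, v n = u n + T (v (n + 1)) := by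
  refine ⟨fun n => t n + ∑' j, (T ^ j) (u (n + j) + T (t (n + j + 1)) - t (n + j)),
    fun n => ?_⟩
  beta_reduce
  rw [(hs n).tsum_eq_zero_add, map_add, (hs (n + 1)).map_tsum T hT]
  simp only [add_zero, pow_zero, Module.End.one_apply, ← Module.End.mul_apply, ← pow_succ',
    add_assoc, add_comm 1]
  abel

end Series

theorem tame_iff_closure_range_pow_eq_general
    {X : Type*} [NormedAddCommGroup X] [NormedSpace ℂ X] [CompleteSpace X]
    (T : X →ₗ[ℂ] X) (hcont : Continuous T) :
    TameOp T ↔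
      ∃ m : ℕ, closure ((LinearMap.range (T ^ m) : Submodule ℂ X) : Set X) =
        closure ((LinearMap.range (T ^ (m + 1)) : Submodule ℂ X) : Set X) := by
  refine ⟨TameOp.exists_closure_range_pow_eq T, fun ⟨m, hm⟩ => ?_⟩
  refine tameOp_of_forall_exists_eq_add_apply_succ T fun u => ?_
  obtain ⟨t, ht⟩ := exists_seq_forall_norm_pow_apply_le T hcont
    ((Module.End.closure_range_pow_eq_succ_iff T m).1 hm) u
  exact exists_eq_add_apply_succ_of_summable T hcont u t
    (summable_pow_apply_of_norm_pow_apply_le T (δ := fun N => u N + T (t (N + 1)) - t N) ht)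

/-- Theorem 5.8: an injective bounded linear operator `T` on a complex Banach space `X`
is tame if and only if `closure(Tᵐ(X)) = closure(Tᵐ⁺¹(X))` for some `m ∈ ℕ`. -/
theorem tame_iff_closure_range_pow_eq
    {X : Type*} [NormedAddCommGroup X] [NormedSpace ℂ X] [CompleteSpace X]
    (T : X →ₗ[ℂ] X) (hcont : Continuous T) (hinj : Function.Injective T) :
    TameOp T ↔
      ∃ m : ℕ, closure ((LinearMap.range (T ^ m) : Submodule ℂ X) : Set X) =
        closure ((LinearMap.range (T ^ (m + 1)) : Submodule ℂ X) : Set X) :=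
  tame_iff_closure_range_pow_eq_general T hcont
end

section
/- Let X and Y be Fréchet spaces over ℂ, let (Hₙ)_{n≥0} be a strictly decreasing sequence of closed finite-codimensional linear subspaces of X with ⋂_{n≥0} Hₙ = {0}, and let G : X → Y be a (not necessarily continuous) invertible linear operator such that G(Hₙ) is closed in Y for every n ≥ 0. Then G is continuous. -/
/-!
Composing `G` with the quotient map `Y → Y ⧸ G(Hₙ)` gives a map that factors through the
finite-dimensional Hausdorff space `X ⧸ Hₙ`, hence is continuous. So the graph of `G`, which is the
intersection over `n` of the closed sets `{(x, y) | y - G x ∈ G(Hₙ)}` because `⋂ₙ G(Hₙ) = {0}`,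
is closed, and the closed graph theorem applies. That theorem holds for complete first-countable
topological vector spaces by Banach's open mapping argument: Baire's theorem makes
`closure (f '' U)` a neighbourhood of `0` for every neighbourhood `U` of `0`, and successive
approximation along a basis `uₙ` with `uₙ₊₁ + uₙ₊₁ ⊆ uₙ` removes the closure.
-/

open Filter Topology Set Function Pointwise

theorem closure_image_mem_nhds_zero_of_surjective {𝕜 E F : Type*} [NontriviallyNormedField 𝕜]
    [AddCommGroup E] [Module 𝕜 E] [TopologicalSpace E] [IsTopologicalAddGroup E]
    [ContinuousSMul 𝕜 E] [AddCommGroup F] [Module 𝕜 F] [TopologicalSpace F]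
    [IsTopologicalAddGroup F] [ContinuousConstSMul 𝕜 F] [BaireSpace F]
    (f : E →ₗ[𝕜] F) (hf : Surjective f) {U : Set E} (hU : U ∈ 𝓝 0) :
    closure (f '' U) ∈ 𝓝 0 := by
  obtain ⟨V, hV, hVU⟩ := exists_nhds_half_neg hU
  obtain ⟨r, hr0, hr1⟩ := NormedField.exists_norm_lt_one 𝕜
  have hr : ∀ n : ℕ, r ^ n ≠ 0 := fun n => pow_ne_zero n (norm_pos_iff.1 hr0)
  have hcover : ⋃ n : ℕ, (r ^ n)⁻¹ • closure (f '' V) = univ := by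
    refine eq_univ_of_forall fun y => ?_
    obtain ⟨x, rfl⟩ := hf y
    have hlim : Tendsto (fun n : ℕ => r ^ n • x) atTop (𝓝 0) := by
      simpa using (tendsto_pow_atTop_nhds_zero_of_norm_lt_one hr1).smul_const x
    obtain ⟨n, hn⟩ := (hlim.eventually hV).exists
    refine mem_iUnion.2 ⟨n, ?_⟩
    rw [← inv_smul_smul₀ (hr n) (f x), ← map_smul]
    exact smul_mem_smul_set (subset_closure (mem_image_of_mem f hn))
  obtain ⟨n, hn⟩ := nonempty_interior_of_iUnion_of_closed
    (fun n => isClosed_closure.smul_of_ne_zero (inv_ne_zero (hr n))) hcover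
  rw [interior_smul₀ (inv_ne_zero (hr n)), smul_set_nonempty] at hn
  obtain ⟨w, hw⟩ := hn
  have hsub : ∀ a ∈ f '' V, ∀ b ∈ f '' V, a - b ∈ f '' U := by
    rintro _ ⟨v, hv, rfl⟩ _ ⟨v', hv', rfl⟩
    exact ⟨v - v', hVU v hv v' hv', map_sub f v v'⟩
  have hnhds : (· + w) ⁻¹' interior (closure (f '' V)) ∈ 𝓝 0 :=
    (continuous_add_const w).continuousAt.preimage_mem_nhds
      (by simpa using isOpen_interior.mem_nhds hw)
  refine mem_of_superset hnhds fun t ht => ?_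
  simpa using map_mem_closure₂ continuous_sub (interior_subset ht) (interior_subset hw) hsub

theorem sum_mem_of_mem_succ {E : Type*} [AddCommMonoid E] [TopologicalSpace E]
    {u : ℕ → Set E} {x : ℕ → E} (hu : (𝓝 (0 : E)).HasAntitoneBasis u)
    (hadd : ∀ n, u (n + 1) + u (n + 1) ⊆ u n) (hx : ∀ n, x n ∈ u (n + 1))
    (t : Finset ℕ) {m : ℕ} (ht : ∀ i ∈ t, m ≤ i) : ∑ i ∈ t, x i ∈ u m := by
  classical
  induction t using Finset.induction_on_min generalizing m with
  | empty => simpa using mem_of_mem_nhds (hu.mem m)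
  | insert a s has ih =>
    rw [Finset.sum_insert fun h => (has a h).false]
    have hma : m ≤ a := ht a (Finset.mem_insert_self a s)
    exact hu.antitone hma (hadd a (add_mem_add (hx a) (ih fun i hi => has i hi)))

theorem exists_hasSum_mem_closure_of_mem_succ {E : Type*} [AddCommGroup E] [UniformSpace E]
    [IsUniformAddGroup E] [CompleteSpace E]
    {u : ℕ → Set E} {x : ℕ → E} (hu : (𝓝 (0 : E)).HasAntitoneBasis u)
    (hadd : ∀ n, u (n + 1) + u (n + 1) ⊆ u n) (hx : ∀ n, x n ∈ u (n + 1)) :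
    ∃ l, HasSum x l ∧ l ∈ closure (u 0) := by
  have hsummable : Summable x := by
    refine summable_iff_vanishing.2 fun W hW => ?_
    obtain ⟨m, hm⟩ := hu.mem_iff.1 hW
    refine ⟨Finset.range m, fun t ht => hm (sum_mem_of_mem_succ hu hadd hx t fun i hi => ?_)⟩
    simpa using Finset.disjoint_left.1 ht hi
  obtain ⟨l, hl⟩ := hsummable
  refine ⟨l, hl, mem_closure_of_tendsto hl.tendsto_sum_nat (Eventually.of_forall fun n => ?_)⟩
  exact sum_mem_of_mem_succ hu hadd hx _ fun i _ => Nat.zero_le i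

theorem closure_image_succ_subset_image_closure {E F : Type*} [AddCommGroup E] [UniformSpace E]
    [IsUniformAddGroup E] [CompleteSpace E] [AddCommGroup F] [TopologicalSpace F]
    [IsTopologicalAddGroup F] [T2Space F] {f : E →+ F} (hf : Continuous f)
    {u : ℕ → Set E} (hu : (𝓝 (0 : E)).HasAntitoneBasis u)
    (hadd : ∀ n, u (n + 1) + u (n + 1) ⊆ u n) (hcl : ∀ n, closure (f '' u n) ∈ 𝓝 0) :
    closure (f '' u 1) ⊆ f '' closure (u 0) := by
  intro y hy
  have hstep : ∀ n, ∀ z ∈ closure (f '' u (n + 1)),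
      ∃ x ∈ u (n + 1), z - f x ∈ closure (f '' u (n + 2)) := by
    intro n z hz
    have hnhds : (z - ·) ⁻¹' closure (f '' u (n + 2)) ∈ 𝓝 z :=
      (continuous_const.sub continuous_id).continuousAt.preimage_mem_nhds
        (by simpa using hcl (n + 2))
    obtain ⟨_, hw, x, hx, rfl⟩ := mem_closure_iff_nhds.1 hz _ hnhds
    exact ⟨x, hx, hw⟩
  choose! g hg using hstep
  let z : ℕ → F := fun n => Nat.rec (motive := fun _ => F) y (fun n zn => zn - f (g n zn)) n
  have hz : ∀ n, z n ∈ closure (f '' u (n + 1)) := by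
    intro n
    induction n with
    | zero => exact hy
    | succ n ih => exact (hg n (z n) ih).2
  let x : ℕ → E := fun n => g n (z n)
  have hx : ∀ n, x n ∈ u (n + 1) := fun n => (hg n (z n) (hz n)).1
  have hfsum : ∀ n, f (∑ i ∈ Finset.range n, x i) = y - z n := by
    intro n
    induction n with
    | zero => simp [z]
    | succ n ih =>
      rw [Finset.sum_range_succ, map_add, ih]
      change y - z n + f (x n) = y - (z n - f (x n))
      abel
  have hz0 : Tendsto z atTop (𝓝 0) := by
    refine (closed_nhds_basis 0).tendsto_right_iff.2 fun W ⟨hW, hWc⟩ => ?_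
    obtain ⟨m, hm⟩ := hu.mem_iff.1 (hf.continuousAt.preimage_mem_nhds (by simpa using hW))
    filter_upwards [eventually_ge_atTop m] with n hn
    exact closure_minimal (image_subset_iff.2 ((hu.antitone (by omega)).trans hm)) hWc (hz n)
  obtain ⟨l, hl, hl0⟩ := exists_hasSum_mem_closure_of_mem_succ hu hadd hx
  refine ⟨l, hl0, tendsto_nhds_unique ((hf.tendsto l).comp hl.tendsto_sum_nat) ?_⟩
  simpa [Function.comp_def, hfsum] using hz0.const_sub y

theorem ContinuousLinearMap.isOpenMap_of_completeSpace_of_firstCountable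
    {𝕜 E F : Type*} [NontriviallyNormedField 𝕜]
    [AddCommGroup E] [Module 𝕜 E] [UniformSpace E] [IsUniformAddGroup E] [ContinuousSMul 𝕜 E]
    [CompleteSpace E] [FirstCountableTopology E]
    [AddCommGroup F] [Module 𝕜 F] [UniformSpace F] [IsUniformAddGroup F] [ContinuousSMul 𝕜 F]
    [CompleteSpace F] [FirstCountableTopology F] [T2Space F]
    (f : E →L[𝕜] F) (hf : Surjective f) : IsOpenMap f := by
  have := IsUniformAddGroup.uniformity_countably_generated (α := F)
  refine IsTopologicalAddGroup.isOpenMap_iff_nhds_zero.2 fun S hS => ?_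
  obtain ⟨C, hC, hCc, hCS⟩ := exists_mem_nhds_isClosed_subset (show ⇑f ⁻¹' S ∈ 𝓝 0 from hS)
  obtain ⟨u, hu, hadd⟩ := IsTopologicalAddGroup.exists_antitone_basis_nhds_zero E
  obtain ⟨m, hm⟩ := hu.mem_iff.1 hC
  have hv : (𝓝 (0 : E)).HasAntitoneBasis (fun n => u (m + n)) :=
    hu.comp_mono (monotone_const.add monotone_id)
      (tendsto_atTop_mono (fun n => Nat.le_add_left n m) tendsto_id)
  have hcl : ∀ n, closure (f '' u (m + n)) ∈ 𝓝 0 := fun n =>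
    closure_image_mem_nhds_zero_of_surjective (f : E →ₗ[𝕜] F) hf (hv.mem n)
  have hsub : closure (f '' u (m + 1)) ⊆ f '' closure (u m) :=
    closure_image_succ_subset_image_closure (f := (f : E →+ F)) f.continuous hv
      (fun n => hadd (m + n)) hcl
  refine mem_of_superset (hcl 1) (hsub.trans ?_)
  rw [image_subset_iff]
  exact (closure_minimal hm hCc).trans hCS

theorem LinearMap.continuous_of_isClosed_graph_of_firstCountable
    {𝕜 E F : Type*} [NontriviallyNormedField 𝕜]
    [AddCommGroup E] [Module 𝕜 E] [UniformSpace E] [IsUniformAddGroup E] [ContinuousSMul 𝕜 E]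
    [CompleteSpace E] [FirstCountableTopology E] [T2Space E]
    [AddCommGroup F] [Module 𝕜 F] [UniformSpace F] [IsUniformAddGroup F] [ContinuousSMul 𝕜 F]
    [CompleteSpace F] [FirstCountableTopology F]
    (g : E →ₗ[𝕜] F) (hg : IsClosed (g.graph : Set (E × F))) : Continuous g := by
  have : CompleteSpace g.graph := hg.completeSpace_coe
  have : IsUniformAddGroup g.graph := inferInstanceAs (IsUniformAddGroup g.graph.toAddSubgroup)
  have : FirstCountableTopology g.graph :=
    inferInstanceAs (FirstCountableTopology (g.graph : Set (E × F)))
  let φ : E ≃ₗ[𝕜] g.graph :=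
    (LinearEquiv.ofLeftInverse (f := LinearMap.id.prod g) (g := Prod.fst) fun _ => rfl).trans
      (LinearEquiv.ofEq _ _ g.graph_eq_range_prod.symm)
  let ψ : g.graph →L[𝕜] E := ⟨φ.symm, continuous_subtype_val.fst⟩
  have hψ : IsOpenMap ψ := ψ.isOpenMap_of_completeSpace_of_firstCountable φ.symm.surjective
  let e : g.graph ≃ₜ E := φ.symm.toEquiv.toHomeomorphOfContinuousOpen ψ.continuous hψ
  exact (continuous_subtype_val.comp e.symm.continuous).snd

theorem LinearMap.isClosed_graph_of_finiteDimensional_quotient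
    {𝕜 E F ι : Type*} [NontriviallyNormedField 𝕜] [CompleteSpace 𝕜]
    [AddCommGroup E] [Module 𝕜 E] [TopologicalSpace E] [IsTopologicalAddGroup E]
    [ContinuousSMul 𝕜 E]
    [AddCommGroup F] [Module 𝕜 F] [TopologicalSpace F] [IsTopologicalAddGroup F]
    [ContinuousSMul 𝕜 F]
    (g : E →ₗ[𝕜] F) (H : ι → Submodule 𝕜 E) (K : ι → Submodule 𝕜 F)
    (hHK : ∀ i, H i ≤ (K i).comap g) (hH : ∀ i, IsClosed (H i : Set E))
    (hfin : ∀ i, FiniteDimensional 𝕜 (E ⧸ H i)) (hK : ∀ i, IsClosed (K i : Set F))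
    (hKbot : ⨅ i, K i = ⊥) : IsClosed (g.graph : Set (E × F)) := by
  have hcont : ∀ i, Continuous ((K i).mkQ ∘ g) := fun i => by
    have := hH i
    have := hfin i
    exact ((H i).mapQ (K i) g (hHK i)).continuous_of_finiteDimensional.comp (H i).continuous_mkQ
  have hgraph : (g.graph : Set (E × F)) = ⋂ i, {p | (K i).mkQ p.2 = ((K i).mkQ ∘ g) p.1} := by
    ext p
    rw [SetLike.mem_coe, LinearMap.mem_graph_iff, ← sub_eq_zero, ← Submodule.mem_bot 𝕜, ← hKbot,
      Submodule.mem_iInf]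
    simp [Submodule.Quotient.eq]
  rw [hgraph]
  refine isClosed_iInter fun i => ?_
  have := hK i
  exact isClosed_eq ((K i).continuous_mkQ.comp continuous_snd) ((hcont i).comp continuous_fst)

theorem continuous_of_image_closed_general
    {X : Type*} [AddCommGroup X] [Module ℂ X] [UniformSpace X] [IsUniformAddGroup X]
    [ContinuousSMul ℂ X] [CompleteSpace X] [FirstCountableTopology X] [T0Space X]
    {Y : Type*} [AddCommGroup Y] [Module ℂ Y] [UniformSpace Y] [IsUniformAddGroup Y]
    [ContinuousSMul ℂ Y] [CompleteSpace Y] [FirstCountableTopology Y]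
    (H : ℕ → Submodule ℂ X)
    (hclosed : ∀ n, IsClosed ((H n : Submodule ℂ X) : Set X))
    (hcodim : ∀ n, FiniteDimensional ℂ (X ⧸ H n))
    (hinter : (⨅ n, H n) = ⊥)
    (G : X ≃ₗ[ℂ] Y) (hG : ∀ n, IsClosed (G '' ((H n : Submodule ℂ X) : Set X))) :
    Continuous G := by
  let K : ℕ → Submodule ℂ Y := fun n => (H n).comap (G.symm : Y →ₗ[ℂ] X)
  have hK : ∀ n, IsClosed (K n : Set Y) := fun n => by
    simpa [K, G.image_eq_preimage_symm] using hG n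
  have hKbot : ⨅ n, K n = ⊥ := by
    simp only [K, ← Submodule.comap_iInf, hinter, Submodule.comap_bot, LinearEquiv.ker]
  have hHK : ∀ n, H n ≤ (K n).comap (G : X →ₗ[ℂ] Y) := fun n x hx => by simpa [K] using hx
  exact (G : X →ₗ[ℂ] Y).continuous_of_isClosed_graph_of_firstCountable
    ((G : X →ₗ[ℂ] Y).isClosed_graph_of_finiteDimensional_quotient H K hHK hclosed hcodim hK hKbot)

/-- Lemma 7.1: let `X`, `Y` be complex Fréchet spaces, `(Hₙ)` a strictly decreasing
sequence of closed finite-codimensional linear subspaces of `X` with `⋂ₙ Hₙ = {0}`, and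
`G : X → Y` an invertible linear operator such that `G(Hₙ)` is closed in `Y` for every
`n`. Then `G` is continuous. -/
theorem continuous_of_image_closed
    {X : Type*} [AddCommGroup X] [Module ℂ X] [UniformSpace X] [IsUniformAddGroup X]
    [ContinuousSMul ℂ X] [CompleteSpace X] [FirstCountableTopology X] [T0Space X]
    [Module ℝ X] [IsScalarTower ℝ ℂ X] [LocallyConvexSpace ℝ X]
    {Y : Type*} [AddCommGroup Y] [Module ℂ Y] [UniformSpace Y] [IsUniformAddGroup Y]
    [ContinuousSMul ℂ Y] [CompleteSpace Y] [FirstCountableTopology Y] [T0Space Y]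
    [Module ℝ Y] [IsScalarTower ℝ ℂ Y] [LocallyConvexSpace ℝ Y]
    (H : ℕ → Submodule ℂ X) (hanti : StrictAnti H)
    (hclosed : ∀ n, IsClosed ((H n : Submodule ℂ X) : Set X))
    (hcodim : ∀ n, FiniteDimensional ℂ (X ⧸ H n))
    (hinter : (⨅ n, H n) = ⊥)
    (G : X ≃ₗ[ℂ] Y) (hG : ∀ n, IsClosed (G '' ((H n : Submodule ℂ X) : Set X))) :
    Continuous G :=
  continuous_of_image_closed_general H hclosed hcodim hinter G hG
end
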